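/- arXiv:2507.15801 — 4 statements merged into one kernel-verified Lean document; each statement's English description precedes it below -/
import Mathlib

section
/- Under the stated setting, suppose for a fixed point x₀ ∈ ℝⁿ that: (i) G^ν(ξ,x₀) ≤ G(ξ,x₀) componentwise for μ-almost every ξ ∈ Ξ and every ν; (ii) liminf_ν E_{μ^ν}[G^ν(ξ,x^ν)] ≥ E_μ[G(ξ,x)] componentwise for every sequence x^ν → x in ℝⁿ; (iii) λ^ν ∈ (0,∞) → 0 and (λ^ν)^{-1/α}(E_{μ^ν}[G^ν(ξ,x₀)] − E_μ[G^ν(ξ,x₀)]) → 0 in ℝ^m. Then f and every f^ν are lower semicontinuous on ℝ^m × ℝⁿ, and: (a) for every sequence (u^ν,x^ν) → (u,x) one has liminf_ν f^ν(u^ν,x^ν) ≥ f(u,x); (b) there exists a sequence u^ν → 0 in ℝ^m with limsup_ν f^ν(u^ν,x₀) ≤ f(0,x₀). -/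
open MeasureTheory Filter Topology Metric Set Pointwise

noncomputable section

/-- Euclidean (ℓ²) norm on `Fin m → ℝ`. -/
def en2 {m : ℕ} (u : Fin m → ℝ) : ℝ := Real.sqrt (∑ i, u i ^ 2)

/-- Componentwise expectation of a vector-valued integrand. -/
def EV {d n m : ℕ} (μ : Measure (EuclideanSpace ℝ (Fin d)))
    (G : EuclideanSpace ℝ (Fin d) → EuclideanSpace ℝ (Fin n) → Fin m → ℝ)
    (x : EuclideanSpace ℝ (Fin n)) : Fin m → ℝ :=
  fun i => ∫ ξ, G ξ x i ∂μ


section Helpers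

variable {Ω : Type*} [MeasurableSpace Ω]

lemma en2_nonneg {m : ℕ} (u : Fin m → ℝ) : 0 ≤ en2 u := Real.sqrt_nonneg _

lemma abs_apply_le_en2 {m : ℕ} (u : Fin m → ℝ) (i : Fin m) : |u i| ≤ en2 u := by
  rw [en2, ← Real.sqrt_sq_eq_abs]
  exact Real.sqrt_le_sqrt (Finset.single_le_sum (f := fun j => u j ^ 2)
    (fun j _ => sq_nonneg _) (Finset.mem_univ i))

lemma continuous_en2 {m : ℕ} : Continuous (en2 (m := m)) :=
  Real.continuous_sqrt.comp (continuous_finset_sum _ fun i _ => ((continuous_apply i).pow 2))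

lemma en2_zero {m : ℕ} : en2 (0 : Fin m → ℝ) = 0 := by simp [en2]

lemma en2_pos {m : ℕ} {u : Fin m → ℝ} (hu : u ≠ 0) : 0 < en2 u := by
  apply Real.sqrt_pos.2
  obtain ⟨i, hi⟩ : ∃ i, u i ≠ 0 := by
    by_contra hc; push_neg at hc; exact hu (funext hc)
  exact lt_of_lt_of_le (by positivity) (Finset.single_le_sum (f := fun j => u j ^ 2)
    (fun j _ => sq_nonneg _) (Finset.mem_univ i))

lemma en2_smul {m : ℕ} {c : ℝ} (hc : 0 ≤ c) (u : Fin m → ℝ) :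
    en2 (fun i => c * u i) = c * en2 u := by
  rw [en2, en2]
  have : ∑ i, (c * u i) ^ 2 = c ^ 2 * ∑ i, u i ^ 2 := by
    rw [Finset.mul_sum]; exact Finset.sum_congr rfl fun i _ => by ring
  rw [this, Real.sqrt_mul (sq_nonneg c), Real.sqrt_sq hc]

lemma integrable_of_ae_bound {f : Ω → ℝ} {μ : Measure Ω} [IsFiniteMeasure μ] {M : ℝ}
    (hm : Measurable f) (hb : ∀ᵐ ξ ∂μ, |f ξ| ≤ M) : Integrable f μ :=
  Integrable.mono' (integrable_const M) hm.aestronglyMeasurable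
    (by simpa [Real.norm_eq_abs] using hb)

lemma abs_integral_le_of_ae_bound {f : Ω → ℝ} {μ : Measure Ω} [IsProbabilityMeasure μ] {M : ℝ}
    (hb : ∀ᵐ ξ ∂μ, |f ξ| ≤ M) : |∫ ξ, f ξ ∂μ| ≤ M := by
  have := norm_integral_le_of_norm_le_const (μ := μ) (f := f) (C := M)
    (by simpa [Real.norm_eq_abs] using hb)
  simpa [Real.norm_eq_abs, measure_univ] using this

lemma fatou_of_bound {μ : Measure Ω} [IsProbabilityMeasure μ] {F : ℕ → Ω → ℝ} {Fb : Ω → ℝ}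
    {M : ℝ}
    (hFm : ∀ k, Measurable (F k)) (hFbm : Measurable Fb)
    (hFbd : ∀ k, ∀ᵐ ξ ∂μ, |F k ξ| ≤ M) (hFbbd : ∀ᵐ ξ ∂μ, |Fb ξ| ≤ M)
    (hlim : ∀ ξ, ∀ y < Fb ξ, ∀ᶠ k in atTop, y < F k ξ) :
    ∀ y < ∫ ξ, Fb ξ ∂μ, ∀ᶠ k in atTop, y < ∫ ξ, F k ξ ∂μ := by
  intro y hy
  set M' : ℝ := M + 1 with hM'
  have hpt : ∀ ξ, ENNReal.ofReal (Fb ξ + M') ≤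
      liminf (fun k => ENNReal.ofReal (F k ξ + M')) atTop := by
    intro ξ
    rw [le_liminf_iff]
    intro b hb
    obtain ⟨r, hr0, hbr, hrs⟩ := ENNReal.lt_iff_exists_real_btwn.1 hb
    have hrlt : r < Fb ξ + M' := by
      by_contra hc
      push_neg at hc
      exact absurd (ENNReal.ofReal_le_ofReal hc) (not_le.2 hrs)
    filter_upwards [hlim ξ (r - M') (by linarith)] with k hk
    exact lt_of_lt_of_le hbr (ENNReal.ofReal_le_ofReal (by linarith))
  have hFint : ∀ k, Integrable (F k) μ := fun k =>
    Integrable.mono' (integrable_const M) (hFm k).aestronglyMeasurable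
      (by simpa [Real.norm_eq_abs] using hFbd k)
  have hFbint : Integrable Fb μ :=
    Integrable.mono' (integrable_const M) hFbm.aestronglyMeasurable
      (by simpa [Real.norm_eq_abs] using hFbbd)
  have hfatou : (∫⁻ ξ, ENNReal.ofReal (Fb ξ + M') ∂μ) ≤
      liminf (fun k => ∫⁻ ξ, ENNReal.ofReal (F k ξ + M') ∂μ) atTop := by
    refine le_trans (lintegral_mono fun ξ => hpt ξ) ?_
    exact lintegral_liminf_le fun k => ((hFm k).add_const M').ennreal_ofReal
  have hconv : ∀ (g : Ω → ℝ), Measurable g → Integrable g μ → (∀ᵐ ξ ∂μ, |g ξ| ≤ M) →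
      (∫⁻ ξ, ENNReal.ofReal (g ξ + M') ∂μ) = ENNReal.ofReal ((∫ ξ, g ξ ∂μ) + M') := by
    intro g hgm hgint hgbd
    have h1 : ENNReal.ofReal (∫ ξ, (g ξ + M') ∂μ) = ∫⁻ ξ, ENNReal.ofReal (g ξ + M') ∂μ :=
      MeasureTheory.ofReal_integral_eq_lintegral_ofReal
        (by exact hgint.add (integrable_const M'))
        (hgbd.mono fun ξ hξ => by dsimp; linarith [abs_le.1 hξ |>.1])
    rw [← h1, integral_add hgint (integrable_const M'), integral_const]
    simp [measure_univ]
  have hEb : |∫ ξ, Fb ξ ∂μ| ≤ M := by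
    have := norm_integral_le_of_norm_le_const (μ := μ) (f := Fb) (C := M)
      (by simpa [Real.norm_eq_abs] using hFbbd)
    simpa [Real.norm_eq_abs, measure_univ] using this
  rw [hconv Fb hFbm hFbint hFbbd] at hfatou
  have hfatou2 : ENNReal.ofReal ((∫ ξ, Fb ξ ∂μ) + M') ≤
      liminf (fun k => ENNReal.ofReal ((∫ ξ, F k ξ ∂μ) + M')) atTop := by
    refine hfatou.trans_eq (liminf_congr (Eventually.of_forall fun k => ?_))
    exact hconv (F k) (hFm k) (hFint k) (hFbd k)
  set y' : ℝ := max y ((∫ ξ, Fb ξ ∂μ) - 1) with hy'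
  have hy'lt : y' < ∫ ξ, Fb ξ ∂μ := max_lt hy (by linarith)
  have hy'M : 0 ≤ y' + M' := by
    have h1 : (∫ ξ, Fb ξ ∂μ) - 1 ≤ y' := le_max_right _ _
    have h2 := abs_le.1 hEb |>.1
    simp only [hM']; linarith
  have hlt : ENNReal.ofReal (y' + M') < ENNReal.ofReal ((∫ ξ, Fb ξ ∂μ) + M') := by
    apply (ENNReal.ofReal_lt_ofReal_iff_of_nonneg hy'M).2
    linarith
  have hev := eventually_lt_of_lt_liminf (lt_of_lt_of_le hlt hfatou2)
  filter_upwards [hev] with k hk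
  have h3 := (ENNReal.ofReal_lt_ofReal_iff_of_nonneg hy'M).1 hk
  have h4 : y' < ∫ ξ, F k ξ ∂μ := by linarith
  exact lt_of_le_of_lt (le_max_left _ _) h4

lemma lsc_EV_aux {n : ℕ} {μ : Measure Ω} [IsProbabilityMeasure μ] {Ξ : Set Ω} (hμΞ : μ Ξᶜ = 0)
    {H : Ω → EuclideanSpace ℝ (Fin n) → ℝ}
    (hm : Measurable fun p : Ω × EuclideanSpace ℝ (Fin n) => H p.1 p.2)
    (hlsc : ∀ ξ, LowerSemicontinuous (H ξ))
    (hbd : ∀ x, ∃ ε > 0, ∃ M, ∀ ξ ∈ Ξ, ∀ y ∈ closedBall x ε, |H ξ y| ≤ M) :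
    LowerSemicontinuous fun x => ∫ ξ, H ξ x ∂μ := by
  intro x y hy
  rw [eventually_iff_seq_eventually]
  intro z hz
  obtain ⟨ε, hε, M, hM⟩ := hbd x
  obtain ⟨N, hN⟩ := eventually_atTop.1 (hz (closedBall_mem_nhds x hε))
  have haeΞ : ∀ᵐ ξ ∂μ, ξ ∈ Ξ := by
    rw [ae_iff]
    exact hμΞ
  have hmeas : ∀ c, Measurable fun ξ => H ξ c := fun c =>
    hm.comp (measurable_id.prodMk measurable_const)
  have hz' : Tendsto (fun k => z (k + N)) atTop (𝓝 x) := hz.comp (tendsto_add_atTop_nat N)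
  have key : ∀ y' < ∫ ξ, H ξ x ∂μ, ∀ᶠ k in atTop, y' < ∫ ξ, H ξ (z (k + N)) ∂μ := by
    apply fatou_of_bound (M := M) (fun k => hmeas _) (hmeas x)
    · intro k
      filter_upwards [haeΞ] with ξ hξ
      exact hM ξ hξ _ (hN (k + N) (Nat.le_add_left N k))
    · filter_upwards [haeΞ] with ξ hξ
      exact hM ξ hξ x (mem_closedBall_self hε.le)
    · intro ξ y' hy'
      exact hz'.eventually (hlsc ξ x y' hy')
  obtain ⟨N', hN'⟩ := eventually_atTop.1 (key y hy)
  refine eventually_atTop.2 ⟨N' + N, fun k hk => ?_⟩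
  have h2 : y < ∫ ξ, H ξ (z ((k - N) + N)) ∂μ := hN' (k - N) (by omega)
  rwa [Nat.sub_add_cancel (by omega)] at h2

lemma mono_lsc_box {m : ℕ} {h : (Fin m → ℝ) → EReal} (hlsc : LowerSemicontinuous h)
    (hmono : ∀ u v : Fin m → ℝ, (∀ i, u i ≤ v i) → h u ≤ h v) {p : Fin m → ℝ} {y : EReal}
    (hy : y < h p) :
    ∃ δ > 0, ∀ v : Fin m → ℝ, (∀ i, p i - δ < v i) → y < h v := by
  have h1 := hlsc p y hy
  rw [Metric.eventually_nhds_iff] at h1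
  obtain ⟨δ, hδ, hδ'⟩ := h1
  refine ⟨δ / 2, by positivity, fun v hv => ?_⟩
  have hw : y < h (fun i => min (v i) (p i)) := by
    apply hδ'
    rw [dist_pi_lt_iff hδ]
    intro i
    rw [Real.dist_eq, abs_lt]
    constructor
    · have := hv i; simp only [min_def]; split <;> linarith
    · have : min (v i) (p i) ≤ p i := min_le_right _ _
      linarith
  exact hw.trans_le (hmono _ _ fun i => min_le_left _ _)

lemma le_liminf_h {m : ℕ} {h : (Fin m → ℝ) → EReal} (hlsc : LowerSemicontinuous h)
    (hmono : ∀ u v : Fin m → ℝ, (∀ i, u i ≤ v i) → h u ≤ h v) {p : Fin m → ℝ}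
    {a : ℕ → Fin m → ℝ} (ha : ∀ i, ∀ y < p i, ∀ᶠ ν in atTop, y < a ν i) :
    h p ≤ liminf (fun ν => h (a ν)) atTop := by
  rw [le_liminf_iff]
  intro y hy
  obtain ⟨δ, hδ, hbox⟩ := mono_lsc_box hlsc hmono hy
  have hev : ∀ᶠ ν in atTop, ∀ i, p i - δ < a ν i :=
    eventually_all.2 fun i => ha i _ (sub_lt_self _ hδ)
  filter_upwards [hev] with ν hν using hbox _ hν

lemma lsc_h_comp {m : ℕ} {β : Type*} [TopologicalSpace β] {h : (Fin m → ℝ) → EReal}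
    (hlsc : LowerSemicontinuous h)
    (hmono : ∀ u v : Fin m → ℝ, (∀ i, u i ≤ v i) → h u ≤ h v)
    {φ : β → Fin m → ℝ} (hφ : ∀ i, LowerSemicontinuous fun b => φ b i) :
    LowerSemicontinuous fun b => h (φ b) := by
  intro b y hy
  obtain ⟨δ, hδ, hbox⟩ := mono_lsc_box hlsc hmono hy
  have hev : ∀ᶠ b' in 𝓝 b, ∀ i, φ b i - δ < φ b' i :=
    eventually_all.2 fun i => hφ i b _ (sub_lt_self _ hδ)
  filter_upwards [hev] with b' hb' using hbox _ hb'

lemma lsc_le_liminf {β : Type*} [TopologicalSpace β] {g : β → EReal}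
    (hg : LowerSemicontinuous g) {x : β} {xs : ℕ → β} (hxs : Tendsto xs atTop (𝓝 x)) :
    g x ≤ liminf (fun ν => g (xs ν)) atTop := by
  rw [le_liminf_iff]
  intro y hy
  exact hxs.eventually (hg x y hy)

end Helpers

/-- Theorem 2.1 (approximation theorem). -/
theorem approximation_theorem
    {d n m : ℕ}
    (Ξ : Set (EuclideanSpace ℝ (Fin d))) (hΞne : Ξ.Nonempty) (hΞcl : IsClosed Ξ)
    (μ : Measure (EuclideanSpace ℝ (Fin d))) [IsProbabilityMeasure μ] (hμΞ : μ Ξᶜ = 0)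
    (μs : ℕ → Measure (EuclideanSpace ℝ (Fin d))) [∀ ν, IsProbabilityMeasure (μs ν)]
    (hμsΞ : ∀ ν, μs ν Ξᶜ = 0)
    (g0 : EuclideanSpace ℝ (Fin n) → EReal)
    (hg0lsc : LowerSemicontinuous g0)
    (hg0bot : ∀ x, g0 x ≠ ⊥) (hg0top : ∃ x, g0 x ≠ ⊤)
    (h : (Fin m → ℝ) → EReal)
    (hhlsc : LowerSemicontinuous h)
    (hhbot : ∀ u, h u ≠ ⊥) (hhtop : ∃ u, h u ≠ ⊤)
    (hhmono : ∀ u v : Fin m → ℝ, (∀ i, u i ≤ v i) → h u ≤ h v)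
    (G : EuclideanSpace ℝ (Fin d) → EuclideanSpace ℝ (Fin n) → Fin m → ℝ)
    (Gs : ℕ → EuclideanSpace ℝ (Fin d) → EuclideanSpace ℝ (Fin n) → Fin m → ℝ)
    (hGmeas : ∀ i, Measurable fun p : EuclideanSpace ℝ (Fin d) × EuclideanSpace ℝ (Fin n) =>
      G p.1 p.2 i)
    (hGlsc : ∀ ξ i, LowerSemicontinuous fun x => G ξ x i)
    (hGsmeas : ∀ ν i, Measurable fun p : EuclideanSpace ℝ (Fin d) × EuclideanSpace ℝ (Fin n) =>
      Gs ν p.1 p.2 i)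
    (hGslsc : ∀ ν ξ i, LowerSemicontinuous fun x => Gs ν ξ x i)
    (hbd : ∀ x, ∃ ε > 0, ∃ M : ℝ, ∀ ξ ∈ Ξ, ∀ y ∈ closedBall x ε,
        en2 (G ξ y) ≤ M ∧ ∀ ν, en2 (Gs ν ξ y) ≤ M)
    (α : ℝ) (hα : 1 ≤ α)
    (lam : ℕ → ℝ) (hlam : ∀ ν, 0 < lam ν)
    (f : (Fin m → ℝ) × EuclideanSpace ℝ (Fin n) → EReal)
    (hf : ∀ u x, f (u, x) = g0 x + h (u + EV μ G x) + (if u = 0 then (0 : EReal) else ⊤))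
    (fs : ℕ → (Fin m → ℝ) × EuclideanSpace ℝ (Fin n) → EReal)
    (hfs : ∀ ν u x, fs ν (u, x) =
        g0 x + h (u + EV (μs ν) (Gs ν) x) + (((1 / (α * lam ν)) * en2 u ^ α : ℝ) : EReal))
    (x0 : EuclideanSpace ℝ (Fin n))
    (hyp_i : ∀ ν, ∀ᵐ ξ ∂μ, ∀ i, Gs ν ξ x0 i ≤ G ξ x0 i)
    (hyp_ii : ∀ (x : EuclideanSpace ℝ (Fin n)) (xs : ℕ → EuclideanSpace ℝ (Fin n)),
        Tendsto xs atTop (𝓝 x) → ∀ i,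
        EV μ G x i ≤ liminf (fun ν => EV (μs ν) (Gs ν) (xs ν) i) atTop)
    (hyp_iii₁ : Tendsto lam atTop (𝓝 0))
    (hyp_iii₂ : Tendsto
        (fun ν => fun i => lam ν ^ (-(1 / α)) * (EV (μs ν) (Gs ν) x0 i - EV μ (Gs ν) x0 i))
        atTop (𝓝 0)) :
    LowerSemicontinuous f ∧ (∀ ν, LowerSemicontinuous (fs ν)) ∧
    (∀ (u : Fin m → ℝ) (x : EuclideanSpace ℝ (Fin n))
        (us : ℕ → Fin m → ℝ) (xs : ℕ → EuclideanSpace ℝ (Fin n)),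
        Tendsto us atTop (𝓝 u) → Tendsto xs atTop (𝓝 x) →
        f (u, x) ≤ liminf (fun ν => fs ν (us ν, xs ν)) atTop) ∧
    (∃ us : ℕ → Fin m → ℝ, Tendsto us atTop (𝓝 0) ∧
        limsup (fun ν => fs ν (us ν, x0)) atTop ≤ f (0, x0)) := by
  classical
  have hα0 : (0 : ℝ) < α := lt_of_lt_of_le one_pos hα
  have haeμ : ∀ᵐ ξ ∂μ, ξ ∈ Ξ := by rw [ae_iff]; exact hμΞ
  have haeμs : ∀ ν, ∀ᵐ ξ ∂(μs ν), ξ ∈ Ξ := fun ν => by rw [ae_iff]; exact hμsΞ ν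
  -- lower semicontinuity of the expectation components
  have hEVlsc : ∀ i, LowerSemicontinuous fun x => EV μ G x i := by
    intro i
    apply lsc_EV_aux hμΞ (hGmeas i) (fun ξ => hGlsc ξ i)
    intro x
    obtain ⟨ε, hε, M, hM⟩ := hbd x
    exact ⟨ε, hε, M, fun ξ hξ y hy => (abs_apply_le_en2 _ i).trans (hM ξ hξ y hy).1⟩
  have hEVslsc : ∀ ν i, LowerSemicontinuous fun x => EV (μs ν) (Gs ν) x i := by
    intro ν i
    apply lsc_EV_aux (hμsΞ ν) (hGsmeas ν i) (fun ξ => hGslsc ν ξ i)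
    intro x
    obtain ⟨ε, hε, M, hM⟩ := hbd x
    exact ⟨ε, hε, M, fun ξ hξ y hy => (abs_apply_le_en2 _ i).trans ((hM ξ hξ y hy).2 ν)⟩
  -- basic lower semicontinuous pieces
  have hT1 : LowerSemicontinuous fun p : (Fin m → ℝ) × EuclideanSpace ℝ (Fin n) => g0 p.2 :=
    fun p y hy => (continuous_snd.tendsto p).eventually (hg0lsc p.2 y hy)
  have hT2gen : ∀ (E : EuclideanSpace ℝ (Fin n) → Fin m → ℝ),
      (∀ i, LowerSemicontinuous fun x => E x i) →
      LowerSemicontinuous fun p : (Fin m → ℝ) × EuclideanSpace ℝ (Fin n) =>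
        h (p.1 + E p.2) := by
    intro E hE
    refine lsc_h_comp (φ := fun p : (Fin m → ℝ) × EuclideanSpace ℝ (Fin n) => p.1 + E p.2)
      hhlsc hhmono fun i => ?_
    have h1 : LowerSemicontinuous fun p : (Fin m → ℝ) × EuclideanSpace ℝ (Fin n) =>
        E p.2 i := fun p y hy => (continuous_snd.tendsto p).eventually (hE i p.2 y hy)
    have h2 : Continuous fun p : (Fin m → ℝ) × EuclideanSpace ℝ (Fin n) => p.1 i :=
      (continuous_apply i).comp continuous_fst
    exact h2.lowerSemicontinuous.add h1
  have hT2 := hT2gen (EV μ G) hEVlsc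
  have hT2s := fun ν => hT2gen (EV (μs ν) (Gs ν)) (hEVslsc ν)
  have hT2bot : ∀ p : (Fin m → ℝ) × EuclideanSpace ℝ (Fin n), h (p.1 + EV μ G p.2) ≠ ⊥ :=
    fun p => hhbot _
  refine ⟨?_, ?_, ?_, ?_⟩
  · -- lower semicontinuity of f
    have hfeq : f = fun p : (Fin m → ℝ) × EuclideanSpace ℝ (Fin n) =>
        g0 p.2 + h (p.1 + EV μ G p.2) + (if p.1 = 0 then (0 : EReal) else ⊤) :=
      funext fun p => hf p.1 p.2
    rw [hfeq]
    have hT3 : LowerSemicontinuous fun p : (Fin m → ℝ) × EuclideanSpace ℝ (Fin n) =>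
        (if p.1 = 0 then (0 : EReal) else ⊤) := by
      intro p y hy
      have hy' : y < (if p.1 = 0 then (0 : EReal) else ⊤) := hy
      by_cases hp : p.1 = 0
      · rw [if_pos hp] at hy'
        refine Eventually.of_forall fun q => ?_
        show y < (if q.1 = 0 then (0 : EReal) else ⊤)
        refine lt_of_lt_of_le hy' ?_
        split
        · exact le_rfl
        · exact le_top
      · rw [if_neg hp] at hy'
        have hopen : IsOpen {q : (Fin m → ℝ) × EuclideanSpace ℝ (Fin n) | q.1 ≠ 0} :=
          isOpen_compl_singleton.preimage continuous_fst
        filter_upwards [hopen.mem_nhds hp] with q hq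
        show y < (if q.1 = 0 then (0 : EReal) else ⊤)
        rw [if_neg hq]
        exact hy' 
    have h12 := hT1.add' hT2 fun p =>
      EReal.continuousAt_add (Or.inr (hhbot _)) (Or.inl (hg0bot _))
    refine h12.add' hT3 fun p => EReal.continuousAt_add (Or.inr ?_) (Or.inl ?_)
    · split
      · simp
      · simp
    · rw [Ne, EReal.add_eq_bot_iff]
      push_neg
      exact ⟨hg0bot _, hhbot _⟩
  · -- lower semicontinuity of each fs ν
    intro ν
    have hfseq : fs ν = fun p : (Fin m → ℝ) × EuclideanSpace ℝ (Fin n) =>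
        g0 p.2 + h (p.1 + EV (μs ν) (Gs ν) p.2) +
          (((1 / (α * lam ν)) * en2 p.1 ^ α : ℝ) : EReal) :=
      funext fun p => hfs ν p.1 p.2
    rw [hfseq]
    have hT3 : LowerSemicontinuous fun p : (Fin m → ℝ) × EuclideanSpace ℝ (Fin n) =>
        (((1 / (α * lam ν)) * en2 p.1 ^ α : ℝ) : EReal) := by
      apply Continuous.lowerSemicontinuous
      apply continuous_coe_real_ereal.comp
      apply Continuous.mul continuous_const
      have hrc : Continuous fun t : ℝ => t ^ α :=
        continuous_iff_continuousAt.2 fun t =>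
          Real.continuousAt_rpow_const t α (Or.inr hα0.le)
      exact hrc.comp (continuous_en2.comp continuous_fst)
    have h12 := hT1.add' (hT2s ν) fun p =>
      EReal.continuousAt_add (Or.inr (hhbot _)) (Or.inl (hg0bot _))
    refine h12.add' hT3 fun p => EReal.continuousAt_add (Or.inr (EReal.coe_ne_bot _)) (Or.inl ?_)
    rw [Ne, EReal.add_eq_bot_iff]
    push_neg
    exact ⟨hg0bot _, hhbot _⟩
  · -- liminf inequality
    intro u x us xs hus hxs
    obtain ⟨ε, hε, M, hM⟩ := hbd x
    have hxball : ∀ᶠ ν in atTop, xs ν ∈ closedBall x ε := hxs (closedBall_mem_nhds x hε)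
    have hEbd : ∀ i, ∀ᶠ ν in atTop, |EV (μs ν) (Gs ν) (xs ν) i| ≤ M := by
      intro i
      filter_upwards [hxball] with ν hν
      apply abs_integral_le_of_ae_bound (μ := μs ν)
      filter_upwards [haeμs ν] with ξ hξ
      exact (abs_apply_le_en2 _ i).trans ((hM ξ hξ _ hν).2 ν)
    have hcomp : ∀ i, ∀ y' : ℝ, y' < (u + EV μ G x) i →
        ∀ᶠ ν in atTop, y' < (us ν + EV (μs ν) (Gs ν) (xs ν)) i := by
      intro i y' hy'
      simp only [Pi.add_apply] at hy' ⊢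
      have hη0 : 0 < (u i + EV μ G x i - y') / 2 := by linarith
      have ev1 : ∀ᶠ ν in atTop, u i - (u i + EV μ G x i - y') / 2 < us ν i := by
        have h1 : Tendsto (fun ν => us ν i) atTop (𝓝 (u i)) := tendsto_pi_nhds.1 hus i
        exact h1.eventually (eventually_gt_nhds (by linarith))
      have hbdd : IsBoundedUnder (· ≥ ·) atTop fun ν => EV (μs ν) (Gs ν) (xs ν) i :=
        isBoundedUnder_of_eventually_ge ((hEbd i).mono fun ν hν => (abs_le.1 hν).1)
      have ev2 : ∀ᶠ ν in atTop,
          EV μ G x i - (u i + EV μ G x i - y') / 2 < EV (μs ν) (Gs ν) (xs ν) i :=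
        eventually_lt_of_lt_liminf
          (lt_of_lt_of_le (by linarith) (hyp_ii x xs hxs i)) hbdd
      filter_upwards [ev1, ev2] with ν h1 h2
      linarith
    have hA : g0 x ≤ liminf (fun ν => g0 (xs ν)) atTop := lsc_le_liminf hg0lsc hxs
    have hB : h (u + EV μ G x) ≤
        liminf (fun ν => h (us ν + EV (μs ν) (Gs ν) (xs ν))) atTop :=
      le_liminf_h hhlsc hhmono hcomp
    have hC : (if u = 0 then (0 : EReal) else ⊤) ≤
        liminf (fun ν => (((1 / (α * lam ν)) * en2 (us ν) ^ α : ℝ) : EReal)) atTop := by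
      by_cases hu : u = 0
      · rw [if_pos hu]
        refine le_liminf_of_le (by isBoundedDefault) (Eventually.of_forall fun ν => ?_)
        have hnn : (0 : ℝ) ≤ (1 / (α * lam ν)) * en2 (us ν) ^ α := by
          have := hlam ν
          have := en2_nonneg (us ν)
          positivity
        exact EReal.coe_nonneg.2 hnn
      · rw [if_neg hu]
        rw [le_liminf_iff]
        intro y hy
        obtain ⟨r, hyr, -⟩ := EReal.exists_between_coe_real hy
        have hc0 : 0 < en2 u / 2 := half_pos (en2_pos hu)
        have hen : ∀ᶠ ν in atTop, en2 u / 2 ≤ en2 (us ν) := by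
          have h1 : Tendsto (fun ν => en2 (us ν)) atTop (𝓝 (en2 u)) :=
            (continuous_en2.tendsto u).comp hus
          exact (h1.eventually (eventually_gt_nhds (half_lt_self (en2_pos hu)))).mono
            fun ν hν => hν.le
        have hinv : Tendsto (fun ν => 1 / (α * lam ν)) atTop atTop := by
          have h1 : Tendsto (fun ν => α * lam ν) atTop (𝓝[>] 0) := by
            rw [tendsto_nhdsWithin_iff]
            constructor
            · simpa using tendsto_const_nhds.mul hyp_iii₁
            · exact Eventually.of_forall fun ν => by
                have := hlam ν; exact mul_pos hα0 this
          have h2 := h1.inv_tendsto_nhdsGT_zero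
          have h3 : (fun ν => α * lam ν)⁻¹ = fun ν => 1 / (α * lam ν) := by
            funext ν
            simp [one_div]
          rwa [h3] at h2
        have hc0α : 0 < (en2 u / 2) ^ α := Real.rpow_pos_of_pos hc0 α
        have hK := hinv.eventually_ge_atTop ((|r| + 1) / (en2 u / 2) ^ α)
        filter_upwards [hen, hK] with ν h1 h2
        have h3 : (en2 u / 2) ^ α ≤ en2 (us ν) ^ α :=
          Real.rpow_le_rpow hc0.le h1 hα0.le
        have hterm : |r| + 1 ≤ (1 / (α * lam ν)) * en2 (us ν) ^ α := by
          calc |r| + 1 = (|r| + 1) / (en2 u / 2) ^ α * (en2 u / 2) ^ α :=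
                (div_mul_cancel₀ _ hc0α.ne').symm
            _ ≤ (1 / (α * lam ν)) * en2 (us ν) ^ α :=
                mul_le_mul h2 h3 hc0α.le (le_trans (by positivity) h2)
        refine lt_of_lt_of_le hyr ?_
        have : r < (1 / (α * lam ν)) * en2 (us ν) ^ α :=
          lt_of_lt_of_le (by cases abs_cases r <;> linarith) hterm
        exact_mod_cast this.le
    calc f (u, x) = g0 x + h (u + EV μ G x) + (if u = 0 then (0 : EReal) else ⊤) := hf u x
      _ ≤ liminf (fun ν => g0 (xs ν)) atTop +
            liminf (fun ν => h (us ν + EV (μs ν) (Gs ν) (xs ν))) atTop +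
            liminf (fun ν => (((1 / (α * lam ν)) * en2 (us ν) ^ α : ℝ) : EReal)) atTop :=
          add_le_add (add_le_add hA hB) hC
      _ ≤ liminf (fun ν => g0 (xs ν) + h (us ν + EV (μs ν) (Gs ν) (xs ν))) atTop +
            liminf (fun ν => (((1 / (α * lam ν)) * en2 (us ν) ^ α : ℝ) : EReal)) atTop :=
          add_le_add EReal.le_liminf_add le_rfl
      _ ≤ liminf (fun ν => g0 (xs ν) + h (us ν + EV (μs ν) (Gs ν) (xs ν)) +
            (((1 / (α * lam ν)) * en2 (us ν) ^ α : ℝ) : EReal)) atTop :=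
          EReal.le_liminf_add
      _ = liminf (fun ν => fs ν (us ν, xs ν)) atTop := by
          simp only [hfs]
  · -- recovery sequence
    obtain ⟨ε0, hε0, M0, hM0⟩ := hbd x0
    set us : ℕ → Fin m → ℝ :=
      fun ν i => EV μ (Gs ν) x0 i - EV (μs ν) (Gs ν) (x0) i with hus_def
    set w : ℕ → Fin m → ℝ :=
      fun ν i => lam ν ^ (-(1 / α)) * (EV (μs ν) (Gs ν) x0 i - EV μ (Gs ν) x0 i) with hw_def
    have hw : Tendsto w atTop (𝓝 0) := hyp_iii₂
    have hfacnn : ∀ ν, (0 : ℝ) ≤ lam ν ^ (-(1 / α)) :=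
      fun ν => Real.rpow_nonneg (hlam ν).le _
    have hwabs : ∀ ν i, |w ν i| = lam ν ^ (-(1 / α)) * |us ν i| := by
      intro ν i
      rw [hw_def, hus_def]
      rw [abs_mul, abs_of_nonneg (hfacnn ν), abs_sub_comm]
    have hustends : Tendsto us atTop (𝓝 0) := by
      rw [tendsto_pi_nhds]
      intro i
      have hwi : Tendsto (fun ν => w ν i) atTop (𝓝 0) := by
        have := tendsto_pi_nhds.1 hw i
        simpa using this
      have habs : Tendsto (fun ν => |w ν i|) atTop (𝓝 0) := by
        simpa using hwi.abs
      have hev : ∀ᶠ ν in atTop, lam ν < 1 := hyp_iii₁.eventually (eventually_lt_nhds one_pos)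
      simp only [Pi.zero_apply]
      apply squeeze_zero_norm' ?_ habs
      filter_upwards [hev] with ν hν
      have hfac : 1 ≤ lam ν ^ (-(1 / α)) :=
        Real.one_le_rpow_of_pos_of_le_one_of_nonpos (hlam ν) hν.le
          (neg_nonpos.2 (by positivity))
      calc ‖us ν i‖ = |us ν i| := Real.norm_eq_abs _
        _ ≤ lam ν ^ (-(1 / α)) * |us ν i| := le_mul_of_one_le_left (abs_nonneg _) hfac
        _ = |w ν i| := (hwabs ν i).symm
    refine ⟨us, hustends, ?_⟩
    -- argument identity
    have hargeq : ∀ ν, us ν + EV (μs ν) (Gs ν) x0 = EV μ (Gs ν) x0 := by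
      intro ν
      funext i
      simp only [Pi.add_apply, hus_def]
      ring
    -- h-monotonicity
    have hGsmeas' : ∀ ν i, Measurable fun ξ => Gs ν ξ x0 i := fun ν i =>
      (hGsmeas ν i).comp (measurable_id.prodMk measurable_const)
    have hGmeas' : ∀ i, Measurable fun ξ => G ξ x0 i := fun i =>
      (hGmeas i).comp (measurable_id.prodMk measurable_const)
    have hint1 : ∀ ν i, Integrable (fun ξ => Gs ν ξ x0 i) μ := by
      intro ν i
      apply integrable_of_ae_bound (hGsmeas' ν i)
      filter_upwards [haeμ] with ξ hξ
      exact (abs_apply_le_en2 _ i).trans ((hM0 ξ hξ x0 (mem_closedBall_self hε0.le)).2 ν)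
    have hint2 : ∀ i, Integrable (fun ξ => G ξ x0 i) μ := by
      intro i
      apply integrable_of_ae_bound (hGmeas' i)
      filter_upwards [haeμ] with ξ hξ
      exact (abs_apply_le_en2 _ i).trans (hM0 ξ hξ x0 (mem_closedBall_self hε0.le)).1
    have hEVle : ∀ ν, h (EV μ (Gs ν) x0) ≤ h (EV μ G x0) := by
      intro ν
      apply hhmono
      intro i
      exact integral_mono_ae (hint1 ν i) (hint2 i) ((hyp_i ν).mono fun ξ hξ => hξ i)
    -- the penalty tends to zero
    have hwen : ∀ ν, en2 (w ν) = lam ν ^ (-(1 / α)) * en2 (us ν) := by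
      intro ν
      have h1 : en2 (w ν) =
          lam ν ^ (-(1 / α)) * en2 (fun i => EV (μs ν) (Gs ν) x0 i - EV μ (Gs ν) x0 i) :=
        en2_smul (hfacnn ν) _
      rw [h1]
      congr 1
      rw [en2, en2]
      congr 1
      apply Finset.sum_congr rfl
      intro i _
      simp only [hus_def]
      ring
    have hent : Tendsto (fun ν => en2 (w ν)) atTop (𝓝 0) := by
      have := (continuous_en2.tendsto (0 : Fin m → ℝ)).comp hw
      simpa [en2_zero, Function.comp_def] using this
    have hrpow : Tendsto (fun ν => en2 (w ν) ^ α) atTop (𝓝 0) := by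
      have h1 : ContinuousAt (fun t : ℝ => t ^ α) 0 :=
        Real.continuousAt_rpow_const 0 α (Or.inr hα0.le)
      have h2 := h1.tendsto.comp hent
      simpa [Real.zero_rpow (ne_of_gt hα0), Function.comp_def] using h2
    have hc0 : Tendsto (fun ν => (1 / α) * en2 (w ν) ^ α) atTop (𝓝 0) := by
      simpa using tendsto_const_nhds.mul hrpow
    have hceq : ∀ ν, (1 / (α * lam ν)) * en2 (us ν) ^ α = (1 / α) * en2 (w ν) ^ α := by
      intro ν
      rw [hwen ν, Real.mul_rpow (hfacnn ν) (en2_nonneg _), ← Real.rpow_mul (hlam ν).le]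
      have hexp : -(1 / α) * α = -1 := by field_simp
      rw [hexp, Real.rpow_neg_one]
      have hl := (hlam ν).ne'
      field_simp
    have hcten : Tendsto (fun ν => (1 / (α * lam ν)) * en2 (us ν) ^ α) atTop (𝓝 0) := by
      simp only [hceq]
      exact hc0
    -- conclude
    set D : EReal := g0 x0 + h (EV μ G x0) with hD
    have hf0 : f (0, x0) = D := by
      rw [hf]
      simp [hD]
    rw [hf0]
    have hpt : ∀ ν, fs ν (us ν, x0) ≤
        D + (((1 / (α * lam ν)) * en2 (us ν) ^ α : ℝ) : EReal) := by
      intro ν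
      rw [hfs, hargeq ν, hD]
      exact add_le_add (add_le_add le_rfl (hEVle ν)) le_rfl
    have hCt : Tendsto (fun ν => (((1 / (α * lam ν)) * en2 (us ν) ^ α : ℝ) : EReal))
        atTop (𝓝 (0 : EReal)) := by
      have := (continuous_coe_real_ereal.tendsto 0).comp hcten
      simpa [Function.comp_def] using this
    have haddc : ContinuousAt (fun z : EReal => D + z) (0 : EReal) := by
      have h1 : ContinuousAt (fun p : EReal × EReal => p.1 + p.2) (D, (0 : EReal)) :=
        EReal.continuousAt_add (Or.inr (by simp)) (Or.inr (by simp))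
      exact h1.comp (Continuous.continuousAt (continuous_const.prodMk continuous_id))
    have hDt : Tendsto (fun ν => D + (((1 / (α * lam ν)) * en2 (us ν) ^ α : ℝ) : EReal))
        atTop (𝓝 D) := by
      have := haddc.tendsto.comp hCt
      simpa [Function.comp_def] using this
    calc limsup (fun ν => fs ν (us ν, x0)) atTop ≤
        limsup (fun ν => D + (((1 / (α * lam ν)) * en2 (us ν) ^ α : ℝ) : EReal)) atTop :=
          limsup_le_limsup (Eventually.of_forall hpt)
      _ = D := hDt.limsup_eq


end
end

section
/- Suppose μ^ν converge weakly to μ on the nonempty closed set Ξ ⊆ ℝ^d. Let g : Ξ × ℝⁿ → ℝ be jointly Borel measurable with g(ξ,·) lsc for each ξ, and let g^ν : Ξ × ℝⁿ → ℝ satisfy: g(·,x) and all g^ν(·,x) are uniformly bounded on Ξ, locally uniformly in x; (i) ξ ↦ g^ν(ξ,x) is continuous on Ξ for every x and ν; (ii) for every ξ^ν → ξ in Ξ and x^ν → x, liminf_ν g^ν(ξ^ν,x^ν) ≥ g(ξ,x). Then: (a) for any infinite N ⊆ ℕ and any x^ν → x along N, liminf_{ν∈N} E_{μ^ν}[g^ν(ξ,x^ν)]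 ≥ E_μ[g(ξ,x)]; (b) for any fixed x₀ ∈ ℝⁿ, there exists a sequence of integers i_ν° ↑ ∞ such that for every sequence of integers i_ν ↑ ∞ with i_ν ≤ i_ν° and all sufficiently large ν, |E_{μ^ν}[g^{i_ν}(ξ,x₀)] − E_μ[g^{i_ν}(ξ,x₀)]| ≤ 1/i_ν. -/
/-!
(a) Write `fₖ = gs (N k) · (xs k)`. Its continuous minorants
`Hⱼ ξ = inf_{k ≥ j, ζ ∈ Ξ} (fₖ ζ + j * dist ζ ξ)` are `j`-Lipschitz, so weak convergence gives
`∫ Hⱼ dμ ≤ liminf ∫ fₖ dμₖ`. Hypothesis (ii) is equivalent to its uniform form "`fₖ > c` for large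
`k` near `ξ`, for every `c < g ξ x`", which makes `Hⱼ ξ` eventually exceed every such `c`; dominated
convergence of `min Hⱼ f` to `f` lets `j → ∞`.

(b) is a diagonal argument: for each `i` the error at index `i` is eventually `≤ 1 / i`, and `i₀ ν`
is the largest `i ≤ ν` such that `ν` has passed the thresholds of all `j ≤ i`.
-/

open MeasureTheory Filter Topology Metric Set

noncomputable section

theorem StrictMono.exists_tendsto_leftInverse {φ : ℕ → ℕ} (hφ : StrictMono φ) :
    ∃ r : ℕ → ℕ, Tendsto r atTop atTop ∧ Function.LeftInverse r φ := by
  classical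
  refine ⟨fun ν => Nat.findGreatest (fun k => φ k ≤ ν) ν, ?_, fun k => ?_⟩
  · exact tendsto_atTop_atTop.2 fun b =>
      ⟨φ b, fun ν hν => Nat.le_findGreatest ((hφ.id_le b).trans hν) hν⟩
  · refine le_antisymm ?_ (Nat.le_findGreatest (hφ.id_le k) le_rfl)
    exact hφ.le_iff_le.1 (Nat.findGreatest_spec (P := fun j => φ j ≤ φ k) (hφ.id_le k) le_rfl)

theorem exists_monotone_tendsto_eventually_forall_le {P : ℕ → ℕ → Prop}
    (h : ∀ i, ∀ᶠ ν in atTop, P i ν) :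
    ∃ i₀ : ℕ → ℕ, Monotone i₀ ∧ Tendsto i₀ atTop atTop ∧ ∀ᶠ ν in atTop, ∀ i ≤ i₀ ν, P i ν := by
  classical
  choose N hN using fun i => eventually_atTop.1 (h i)
  refine ⟨fun ν => Nat.findGreatest (fun i => ∀ j ≤ i, N j ≤ ν) ν, ?_, ?_, ?_⟩
  · exact fun a b hab => Nat.findGreatest_mono (fun i hi j hj => (hi j hj).trans hab) hab
  · refine tendsto_atTop.2 fun b => ?_
    have hb : ∀ᶠ ν in atTop, ∀ j ∈ Iic b, N j ≤ ν :=
      (finite_Iic b).eventually_all.2 fun j _ => eventually_ge_atTop (N j)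
    filter_upwards [hb, eventually_ge_atTop b] with ν hNν hbν
    exact Nat.le_findGreatest hbν hNν
  · filter_upwards [eventually_ge_atTop (N 0)] with ν hν i hi
    have hspec := Nat.findGreatest_spec (P := fun i => ∀ j ≤ i, N j ≤ ν) (Nat.zero_le ν)
      fun j hj => (Nat.le_zero.1 hj) ▸ hν
    exact hN i ν (hspec i hi)

theorem exists_monotone_tendsto_abs_sub_le_one_div {a : ℕ → ℕ → ℝ} {b : ℕ → ℝ}
    (h : ∀ i, Tendsto (a i) atTop (𝓝 (b i))) :
    ∃ i₀ : ℕ → ℕ, Monotone i₀ ∧ Tendsto i₀ atTop atTop ∧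
      ∀ iseq : ℕ → ℕ, Tendsto iseq atTop atTop → (∀ ν, iseq ν ≤ i₀ ν) →
        ∀ᶠ ν in atTop, |a (iseq ν) ν - b (iseq ν)| ≤ 1 / (iseq ν : ℝ) := by
  have hrate : ∀ i, ∀ᶠ ν in atTop, 0 < i → |a i ν - b i| ≤ 1 / (i : ℝ) := by
    intro i
    rcases i.eq_zero_or_pos with rfl | hi
    · exact .of_forall fun ν h => absurd h (lt_irrefl 0)
    filter_upwards [(h i).eventually (closedBall_mem_nhds _ (by positivity : (0 : ℝ) < 1 / i))]
      with ν hν _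
    rwa [Real.dist_eq] at hν
  obtain ⟨i₀, hmono, htop, hi₀⟩ := exists_monotone_tendsto_eventually_forall_le hrate
  refine ⟨i₀, hmono, htop, fun iseq hiseq hle => ?_⟩
  filter_upwards [hi₀, hiseq.eventually_gt_atTop 0] with ν hν hpos
  exact hν _ (hle ν) hpos

theorem eventually_atTop_prod_nhdsWithin_of_seq {Z : Type*} [TopologicalSpace Z]
    [FirstCountableTopology Z] {S : Set Z} {z : Z} {P : ℕ → Z → Prop}
    (h : ∀ zs : ℕ → Z, (∀ ν, zs ν ∈ S) → Tendsto zs atTop (𝓝 z) → ∀ᶠ ν in atTop, P ν (zs ν)) :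
    ∀ᶠ p in atTop ×ˢ 𝓝[S] z, P p.1 p.2 := by
  obtain ⟨U, hU⟩ := (𝓝 z).exists_antitone_basis
  by_contra hP
  have hfreq : ∀ n, ∃ᶠ ν in atTop, ∃ w ∈ U n ∩ S, ¬P ν w := by
    intro n
    contrapose! hP
    have hUn : U n ∩ S ∈ 𝓝[S] z :=
      inter_mem (mem_nhdsWithin_of_mem_nhds (hU.mem n)) self_mem_nhdsWithin
    filter_upwards [hP.prod_mk hUn] with p hp using hp.1 p.2 hp.2
  -- Counterexamples along an extraction `φ`, spread over all of `ℕ` by a left inverse of `φ`.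
  obtain ⟨φ, hφ, hφw⟩ := extraction_forall_of_frequently hfreq
  choose w hwU hwP using hφw
  obtain ⟨r, hr, hrφ⟩ := hφ.exists_tendsto_leftInverse
  have hwr := h (w ∘ r) (fun ν => (hwU _).2) ((hU.tendsto fun n => (hwU n).1).comp hr)
  obtain ⟨n, hn⟩ := (hφ.tendsto_atTop.eventually hwr).exists
  exact hwP n (by simpa only [Function.comp_apply, hrφ n] using hn)

theorem eventually_atTop_prod_lt_of_le_liminf {X Y : Type*} [TopologicalSpace X]
    [FirstCountableTopology X] [TopologicalSpace Y] [FirstCountableTopology Y] {Ξ : Set X} {ξ : X}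
    {x : Y} {F : ℕ → X → Y → ℝ} {a c : ℝ} (hbdd : ∃ m, ∀ᶠ y in 𝓝 x, ∀ ζ ∈ Ξ, ∀ ν, m ≤ F ν ζ y)
    (h : ∀ ξs : ℕ → X, (∀ ν, ξs ν ∈ Ξ) → Tendsto ξs atTop (𝓝 ξ) →
      ∀ xs : ℕ → Y, Tendsto xs atTop (𝓝 x) → a ≤ liminf (fun ν => F ν (ξs ν) (xs ν)) atTop)
    (hc : c < a) :
    ∀ᶠ p in atTop ×ˢ (𝓝[Ξ] ξ ×ˢ 𝓝 x), c < F p.1 p.2.1 p.2.2 := by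
  obtain ⟨m, hm⟩ := hbdd
  rw [← nhdsWithin_univ x, ← nhdsWithin_prod_eq]
  refine eventually_atTop_prod_nhdsWithin_of_seq (P := fun ν (w : X × Y) => c < F ν w.1 w.2)
    fun zs hzs hz => ?_
  have hfst := (continuous_fst.tendsto _).comp hz
  have hsnd := (continuous_snd.tendsto _).comp hz
  have hm' : ∀ᶠ ν in atTop, m ≤ F ν (zs ν).1 (zs ν).2 :=
    (hsnd.eventually hm).mono fun ν hν => hν _ (hzs ν).1 ν
  exact eventually_lt_of_lt_liminf (hc.trans_le (h _ (fun ν => (hzs ν).1) hfst _ hsnd))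
    (isBoundedUnder_of_eventually_ge hm')

section TailEnvelope

variable {E : Type*} [PseudoMetricSpace E] {Ξ : Set E} {fk : ℕ → E → ℝ} {m : ℝ}

/-- Pasch–Hausdorff regularisation of the tail infimum `inf_{k ≥ j} fk k` on `Ξ`. -/
def tailLipschitzEnvelope (Ξ : Set E) (fk : ℕ → E → ℝ) (j : ℕ) (ξ : E) : ℝ :=
  ⨅ p : ℕ × Ξ, (fk (j + p.1) p.2 + j * dist (p.2 : E) ξ)

theorem bddBelow_range_tailLipschitzEnvelope (hm : ∀ k, ∀ ζ ∈ Ξ, m ≤ fk k ζ) (j : ℕ) (ξ : E) :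
    BddBelow (range fun p : ℕ × Ξ => fk (j + p.1) p.2 + j * dist (p.2 : E) ξ) :=
  ⟨m, forall_mem_range.2 fun p => le_add_of_le_of_nonneg (hm _ _ p.2.2) (by positivity)⟩

theorem tailLipschitzEnvelope_le (hm : ∀ k, ∀ ζ ∈ Ξ, m ≤ fk k ζ) {j k : ℕ} (hjk : j ≤ k)
    {ξ : E} (hξ : ξ ∈ Ξ) : tailLipschitzEnvelope Ξ fk j ξ ≤ fk k ξ := by
  simpa [tailLipschitzEnvelope, Nat.add_sub_cancel' hjk] using
    ciInf_le (bddBelow_range_tailLipschitzEnvelope hm j ξ) (k - j, ⟨ξ, hξ⟩)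

theorem le_tailLipschitzEnvelope [Nonempty Ξ] (hm : ∀ k, ∀ ζ ∈ Ξ, m ≤ fk k ζ) (j : ℕ) (ξ : E) :
    m ≤ tailLipschitzEnvelope Ξ fk j ξ :=
  le_ciInf fun p => le_add_of_le_of_nonneg (hm _ _ p.2.2) (by positivity)

theorem lipschitzWith_tailLipschitzEnvelope [Nonempty Ξ] (hm : ∀ k, ∀ ζ ∈ Ξ, m ≤ fk k ζ)
    (j : ℕ) : LipschitzWith j (tailLipschitzEnvelope Ξ fk j) := by
  refine LipschitzWith.of_le_add_mul _ fun ξ ξ' => ?_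
  rw [← sub_le_iff_le_add]
  refine le_ciInf fun p => sub_le_iff_le_add.2 ?_
  calc tailLipschitzEnvelope Ξ fk j ξ ≤ fk (j + p.1) p.2 + j * dist (p.2 : E) ξ :=
        ciInf_le (bddBelow_range_tailLipschitzEnvelope hm j ξ) p
    _ ≤ fk (j + p.1) p.2 + j * dist (p.2 : E) ξ' + j * dist ξ ξ' := by
        rw [add_assoc, ← mul_add]
        gcongr
        exact dist_triangle_right _ _ _

theorem eventually_le_tailLipschitzEnvelope [Nonempty Ξ] (hm : ∀ k, ∀ ζ ∈ Ξ, m ≤ fk k ζ)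
    {ξ : E} {c : ℝ} (h : ∀ᶠ p in atTop ×ˢ 𝓝[Ξ] ξ, c < fk p.1 p.2) :
    ∀ᶠ j in atTop, c ≤ tailLipschitzEnvelope Ξ fk j ξ := by
  obtain ⟨⟨K, δ⟩, ⟨-, hδ⟩, hKδ⟩ := (atTop_basis.prod nhdsWithin_basis_ball).eventually_iff.1 h
  filter_upwards [eventually_ge_atTop K,
    tendsto_natCast_atTop_atTop.eventually_ge_atTop ((c - m) / δ)] with j hjK hjδ
  refine le_ciInf fun ⟨i, ζ, hζ⟩ => ?_
  -- Near `ξ` the term `fk` exceeds `c`; away from `ξ` the penalty `j * dist ≥ j * δ` does.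
  by_cases hd : dist ζ ξ < δ
  · exact le_add_of_le_of_nonneg (@hKδ (j + i, ζ) ⟨le_add_right hjK, hd, hζ⟩).le (by positivity)
  · calc c ≤ m + j * δ := by linarith [(div_le_iff₀ hδ).1 hjδ]
      _ ≤ fk (j + i) ζ + j * dist ζ ξ := by gcongr; exacts [hm _ ζ hζ, not_lt.1 hd]

theorem tendsto_min_tailLipschitzEnvelope [Nonempty Ξ] (hm : ∀ k, ∀ ζ ∈ Ξ, m ≤ fk k ζ)
    {ξ : E} {a : ℝ} (h : ∀ c < a, ∀ᶠ p in atTop ×ˢ 𝓝[Ξ] ξ, c < fk p.1 p.2) :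
    Tendsto (fun j => min (tailLipschitzEnvelope Ξ fk j ξ) a) atTop (𝓝 a) := by
  refine tendsto_order.2 ⟨fun c hc => ?_,
    fun c hc => .of_forall fun j => (min_le_right _ _).trans_lt hc⟩
  obtain ⟨b, hcb, hb⟩ := exists_between hc
  filter_upwards [eventually_le_tailLipschitzEnvelope hm (h b hb)] with j hj
  exact lt_min (hcb.trans_le hj) hc

end TailEnvelope

theorem integrable_of_forall_mem_abs_le {E : Type*} [MeasurableSpace E] {μ : Measure E}
    [IsFiniteMeasure μ] {Ξ : Set E} (hμ : ∀ᵐ ξ ∂μ, ξ ∈ Ξ) {f : E → ℝ}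
    (hf : AEStronglyMeasurable f μ) {M : ℝ} (hM : ∀ ξ ∈ Ξ, |f ξ| ≤ M) : Integrable f μ :=
  .of_bound hf M (hμ.mono fun ξ hξ => (Real.norm_eq_abs _).trans_le (hM ξ hξ))

theorem le_liminf_integral_of_eventually_le {E : Type*} [MeasurableSpace E] {Ξ : Set E}
    {μk : ℕ → Measure E} [∀ k, IsProbabilityMeasure (μk k)] (hμk : ∀ k, ∀ᵐ ξ ∂μk k, ξ ∈ Ξ)
    {h : E → ℝ} {fk : ℕ → E → ℝ} {L M : ℝ} (hL : Tendsto (fun k => ∫ ξ, h ξ ∂μk k) atTop (𝓝 L))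
    (hh : ∀ k, Integrable h (μk k)) (hfk : ∀ k, Integrable (fk k) (μk k))
    (hfkM : ∀ k, ∀ ξ ∈ Ξ, fk k ξ ≤ M) (hle : ∀ᶠ k in atTop, ∀ ξ ∈ Ξ, h ξ ≤ fk k ξ) :
    L ≤ liminf (fun k => ∫ ξ, fk k ξ ∂μk k) atTop := by
  have hle' : ∀ᶠ k in atTop, ∫ ξ, h ξ ∂μk k ≤ ∫ ξ, fk k ξ ∂μk k :=
    hle.mono fun k hk => integral_mono_ae (hh k) (hfk k) ((hμk k).mono hk)
  have hbdd : IsBoundedUnder (· ≤ ·) atTop fun k => ∫ ξ, fk k ξ ∂μk k :=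
    isBoundedUnder_of ⟨M, fun k => (integral_mono_ae (hfk k) (integrable_const M)
      ((hμk k).mono (hfkM k))).trans_eq (by simp)⟩
  rw [← hL.liminf_eq]
  exact liminf_le_liminf hle' hL.isBoundedUnder_ge hbdd.isCoboundedUnder_ge

theorem integral_le_liminf_integral {E : Type*} [PseudoMetricSpace E] [MeasurableSpace E]
    [OpensMeasurableSpace E] {Ξ : Set E} (hΞ : MeasurableSet Ξ)
    {μ : Measure E} [IsFiniteMeasure μ] (hμ : ∀ᵐ ξ ∂μ, ξ ∈ Ξ)
    {μk : ℕ → Measure E} [∀ k, IsProbabilityMeasure (μk k)] (hμk : ∀ k, ∀ᵐ ξ ∂μk k, ξ ∈ Ξ)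
    (hweak : ∀ ℓ : E → ℝ, ContinuousOn ℓ Ξ → (∃ C : ℝ, ∀ ξ ∈ Ξ, |ℓ ξ| ≤ C) →
      Tendsto (fun k => ∫ ξ, ℓ ξ ∂μk k) atTop (𝓝 (∫ ξ, ℓ ξ ∂μ)))
    {f : E → ℝ} (hf : Measurable f) {fk : ℕ → E → ℝ} (hfk : ∀ k, ContinuousOn (fk k) Ξ)
    {M : ℝ} (hfM : ∀ ξ ∈ Ξ, |f ξ| ≤ M) (hfkM : ∀ k, ∀ ξ ∈ Ξ, |fk k ξ| ≤ M)
    (hlow : ∀ ξ ∈ Ξ, ∀ c < f ξ, ∀ᶠ p in atTop ×ˢ 𝓝[Ξ] ξ, c < fk p.1 p.2) :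
    ∫ ξ, f ξ ∂μ ≤ liminf (fun k => ∫ ξ, fk k ξ ∂μk k) atTop := by
  have : Nonempty Ξ := by
    by_contra hΞe
    exact IsProbabilityMeasure.ne_zero (μk 0)
      (by simpa [not_nonempty_iff_eq_empty'.1 hΞe] using hμk 0)
  set H := tailLipschitzEnvelope Ξ fk
  have hm : ∀ k, ∀ ζ ∈ Ξ, -M ≤ fk k ζ := fun k ζ hζ => neg_le_of_abs_le (hfkM k ζ hζ)
  have hHcont : ∀ j, Continuous (H j) := fun j =>
    (lipschitzWith_tailLipschitzEnvelope hm j).continuous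
  have hHM : ∀ j, ∀ ξ ∈ Ξ, |H j ξ| ≤ M := fun j ξ hξ =>
    abs_le.2 ⟨le_tailLipschitzEnvelope hm j ξ,
      (tailLipschitzEnvelope_le hm le_rfl hξ).trans (le_of_abs_le (hfkM j ξ hξ))⟩
  have hfkint : ∀ k, Integrable (fk k) (μk k) := fun k =>
    integrable_of_forall_mem_abs_le (hμk k)
      (by simpa only [Measure.restrict_eq_self_of_ae_mem (hμk k)] using
        (hfk k).aestronglyMeasurable (μ := μk k) hΞ) (hfkM k)
  have hHint : ∀ (ν : Measure E) [IsFiniteMeasure ν], (∀ᵐ ξ ∂ν, ξ ∈ Ξ) → ∀ j, Integrable (H j) ν :=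
    fun ν _ hν j => integrable_of_forall_mem_abs_le hν (hHcont j).aestronglyMeasurable (hHM j)
  have hH_le : ∀ j, ∫ ξ, H j ξ ∂μ ≤ liminf (fun k => ∫ ξ, fk k ξ ∂μk k) atTop := fun j =>
    le_liminf_integral_of_eventually_le hμk (hweak (H j) (hHcont j).continuousOn ⟨M, hHM j⟩)
      (fun k => hHint _ (hμk k) j) hfkint (fun k ξ hξ => le_of_abs_le (hfkM k ξ hξ))
      ((eventually_ge_atTop j).mono fun k hk ξ hξ => tailLipschitzEnvelope_le hm hk hξ)
  have hminM : ∀ j, ∀ ξ ∈ Ξ, |min (H j ξ) (f ξ)| ≤ M := fun j ξ hξ =>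
    abs_le.2 ⟨le_min (neg_le_of_abs_le (hHM j ξ hξ)) (neg_le_of_abs_le (hfM ξ hξ)),
      (min_le_right _ _).trans (le_of_abs_le (hfM ξ hξ))⟩
  have hminmeas : ∀ j, AEStronglyMeasurable (fun ξ => min (H j ξ) (f ξ)) μ := fun j =>
    ((hHcont j).measurable.min hf).aestronglyMeasurable
  have hmin : Tendsto (fun j => ∫ ξ, min (H j ξ) (f ξ) ∂μ) atTop (𝓝 (∫ ξ, f ξ ∂μ)) :=
    tendsto_integral_of_dominated_convergence (fun _ => M) hminmeas (integrable_const M)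
      (fun j => hμ.mono (hminM j))
      (hμ.mono fun ξ hξ => tendsto_min_tailLipschitzEnvelope hm (hlow ξ hξ))
  refine le_of_tendsto' hmin fun j => (integral_mono_ae ?_ (hHint μ hμ j) ?_).trans (hH_le j)
  · exact integrable_of_forall_mem_abs_le hμ (hminmeas j) (hminM j)
  · exact .of_forall fun ξ => min_le_left _ _

theorem weak_convergence_perturbation_general
    {d n : ℕ}
    (Ξ : Set (EuclideanSpace ℝ (Fin d))) (hΞcl : IsClosed Ξ)
    (μ : Measure (EuclideanSpace ℝ (Fin d))) [IsProbabilityMeasure μ] (hμΞ : μ Ξᶜ = 0)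
    (μs : ℕ → Measure (EuclideanSpace ℝ (Fin d))) [∀ ν, IsProbabilityMeasure (μs ν)]
    (hμsΞ : ∀ ν, μs ν Ξᶜ = 0)
    (hweak : ∀ ℓ : EuclideanSpace ℝ (Fin d) → ℝ, ContinuousOn ℓ Ξ →
        (∃ C : ℝ, ∀ ξ ∈ Ξ, |ℓ ξ| ≤ C) →
        Tendsto (fun ν => ∫ ξ in Ξ, ℓ ξ ∂(μs ν)) atTop (𝓝 (∫ ξ in Ξ, ℓ ξ ∂μ)))
    (g : EuclideanSpace ℝ (Fin d) → EuclideanSpace ℝ (Fin n) → ℝ)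
    (gs : ℕ → EuclideanSpace ℝ (Fin d) → EuclideanSpace ℝ (Fin n) → ℝ)
    (hgmeas : Measurable fun q : EuclideanSpace ℝ (Fin d) × EuclideanSpace ℝ (Fin n) =>
      g q.1 q.2)
    (hbd : ∀ x, ∃ ε > 0, ∃ M : ℝ, ∀ ξ ∈ Ξ, ∀ y ∈ closedBall x ε,
        |g ξ y| ≤ M ∧ ∀ ν, |gs ν ξ y| ≤ M)
    (hyp_i : ∀ ν x, ContinuousOn (fun ξ => gs ν ξ x) Ξ)
    (hyp_ii : ∀ ξ ∈ Ξ, ∀ ξs : ℕ → EuclideanSpace ℝ (Fin d), (∀ ν, ξs ν ∈ Ξ) →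
        Tendsto ξs atTop (𝓝 ξ) →
        ∀ (x : EuclideanSpace ℝ (Fin n)) (xs : ℕ → EuclideanSpace ℝ (Fin n)),
        Tendsto xs atTop (𝓝 x) →
        g ξ x ≤ liminf (fun ν => gs ν (ξs ν) (xs ν)) atTop) :
    (∀ N : ℕ → ℕ, StrictMono N →
      ∀ (x : EuclideanSpace ℝ (Fin n)) (xs : ℕ → EuclideanSpace ℝ (Fin n)),
      Tendsto xs atTop (𝓝 x) →
      (∫ ξ, g ξ x ∂μ) ≤ liminf (fun k => ∫ ξ, gs (N k) ξ (xs k) ∂(μs (N k))) atTop) ∧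
    (∀ x0 : EuclideanSpace ℝ (Fin n), ∃ i0 : ℕ → ℕ,
      Monotone i0 ∧ Tendsto i0 atTop atTop ∧
      ∀ iseq : ℕ → ℕ, Monotone iseq → Tendsto iseq atTop atTop → (∀ ν, iseq ν ≤ i0 ν) →
        ∀ᶠ ν in atTop,
          |(∫ ξ, gs (iseq ν) ξ x0 ∂(μs ν)) - ∫ ξ, gs (iseq ν) ξ x0 ∂μ| ≤
            1 / (iseq ν : ℝ)) := by
  have hμae : ∀ᵐ ξ ∂μ, ξ ∈ Ξ := mem_ae_iff.2 hμΞ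
  have hμsae : ∀ ν, ∀ᵐ ξ ∂μs ν, ξ ∈ Ξ := fun ν => mem_ae_iff.2 (hμsΞ ν)
  have hweak' : ∀ ℓ, ContinuousOn ℓ Ξ → (∃ C : ℝ, ∀ ξ ∈ Ξ, |ℓ ξ| ≤ C) →
      Tendsto (fun ν => ∫ ξ, ℓ ξ ∂μs ν) atTop (𝓝 (∫ ξ, ℓ ξ ∂μ)) := by
    simpa only [Measure.restrict_eq_self_of_ae_mem hμae,
      Measure.restrict_eq_self_of_ae_mem (hμsae _)] using hweak
  refine ⟨fun N hN x xs hxs => ?_, fun x0 => ?_⟩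
  · obtain ⟨ε, hε, M, hM⟩ := hbd x
    obtain ⟨K, hK⟩ := eventually_atTop.1 (hxs.eventually (closedBall_mem_nhds x hε))
    have hlow : ∀ ξ ∈ Ξ, ∀ c < g ξ x,
        ∀ᶠ p in atTop ×ˢ (𝓝[Ξ] ξ ×ˢ 𝓝 x), c < gs p.1 p.2.1 p.2.2 := fun ξ hξ c hc =>
      eventually_atTop_prod_lt_of_le_liminf ⟨-M, mem_of_superset (closedBall_mem_nhds x hε)
        fun y hy ζ hζ ν => neg_le_of_abs_le ((hM ζ hζ y hy).2 ν)⟩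
        (fun ξs hξs hξst => hyp_ii ξ hξ ξs hξs hξst x) hc
    have hNK : Tendsto (fun k => N (k + K)) atTop atTop :=
      hN.tendsto_atTop.comp (tendsto_add_atTop_nat K)
    -- Shifting by `K` puts every `xs k` in the ball where the bound `M` holds.
    rw [← liminf_nat_add _ K]
    refine integral_le_liminf_integral hΞcl.measurableSet hμae (fun k => hμsae _)
      (fun ℓ hℓ hC => (hweak' ℓ hℓ hC).comp hNK) (hgmeas.comp measurable_prodMk_right)
      (fun k => hyp_i _ _) (fun ξ hξ => (hM ξ hξ x (mem_closedBall_self hε.le)).1)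
      (fun k ξ hξ => (hM ξ hξ _ (hK _ (Nat.le_add_left K k))).2 _) fun ξ hξ c hc => ?_
    exact ((hNK.comp tendsto_fst).prodMk (tendsto_snd.prodMk
      ((hxs.comp (tendsto_add_atTop_nat K)).comp tendsto_fst))).eventually (hlow ξ hξ c hc)
  · obtain ⟨ε, hε, M, hM⟩ := hbd x0
    obtain ⟨i0, hmono, htop, hi0⟩ := exists_monotone_tendsto_abs_sub_le_one_div fun i =>
      hweak' _ (hyp_i i x0) ⟨M, fun ξ hξ => (hM ξ hξ x0 (mem_closedBall_self hε.le)).2 i⟩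
    exact ⟨i0, hmono, htop, fun iseq _ => hi0 iseq⟩

/-- Proposition 3.1: sufficient conditions under weak convergence. -/
theorem weak_convergence_perturbation
    {d n : ℕ}
    (Ξ : Set (EuclideanSpace ℝ (Fin d))) (hΞne : Ξ.Nonempty) (hΞcl : IsClosed Ξ)
    (μ : Measure (EuclideanSpace ℝ (Fin d))) [IsProbabilityMeasure μ] (hμΞ : μ Ξᶜ = 0)
    (μs : ℕ → Measure (EuclideanSpace ℝ (Fin d))) [∀ ν, IsProbabilityMeasure (μs ν)]
    (hμsΞ : ∀ ν, μs ν Ξᶜ = 0)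
    (hweak : ∀ ℓ : EuclideanSpace ℝ (Fin d) → ℝ, ContinuousOn ℓ Ξ →
        (∃ C : ℝ, ∀ ξ ∈ Ξ, |ℓ ξ| ≤ C) →
        Tendsto (fun ν => ∫ ξ in Ξ, ℓ ξ ∂(μs ν)) atTop (𝓝 (∫ ξ in Ξ, ℓ ξ ∂μ)))
    (g : EuclideanSpace ℝ (Fin d) → EuclideanSpace ℝ (Fin n) → ℝ)
    (gs : ℕ → EuclideanSpace ℝ (Fin d) → EuclideanSpace ℝ (Fin n) → ℝ)
    (hgmeas : Measurable fun q : EuclideanSpace ℝ (Fin d) × EuclideanSpace ℝ (Fin n) =>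
      g q.1 q.2)
    (hglsc : ∀ ξ, LowerSemicontinuous (g ξ))
    (hbd : ∀ x, ∃ ε > 0, ∃ M : ℝ, ∀ ξ ∈ Ξ, ∀ y ∈ closedBall x ε,
        |g ξ y| ≤ M ∧ ∀ ν, |gs ν ξ y| ≤ M)
    (hyp_i : ∀ ν x, ContinuousOn (fun ξ => gs ν ξ x) Ξ)
    (hyp_ii : ∀ ξ ∈ Ξ, ∀ ξs : ℕ → EuclideanSpace ℝ (Fin d), (∀ ν, ξs ν ∈ Ξ) →
        Tendsto ξs atTop (𝓝 ξ) →
        ∀ (x : EuclideanSpace ℝ (Fin n)) (xs : ℕ → EuclideanSpace ℝ (Fin n)),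
        Tendsto xs atTop (𝓝 x) →
        g ξ x ≤ liminf (fun ν => gs ν (ξs ν) (xs ν)) atTop) :
    (∀ N : ℕ → ℕ, StrictMono N →
      ∀ (x : EuclideanSpace ℝ (Fin n)) (xs : ℕ → EuclideanSpace ℝ (Fin n)),
      Tendsto xs atTop (𝓝 x) →
      (∫ ξ, g ξ x ∂μ) ≤ liminf (fun k => ∫ ξ, gs (N k) ξ (xs k) ∂(μs (N k))) atTop) ∧
    (∀ x0 : EuclideanSpace ℝ (Fin n), ∃ i0 : ℕ → ℕ,
      Monotone i0 ∧ Tendsto i0 atTop atTop ∧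
      ∀ iseq : ℕ → ℕ, Monotone iseq → Tendsto iseq atTop atTop → (∀ ν, iseq ν ≤ i0 ν) →
        ∀ᶠ ν in atTop,
          |(∫ ξ, gs (iseq ν) ξ x0 ∂(μs ν)) - ∫ ξ, gs (iseq ν) ξ x0 ∂μ| ≤
            1 / (iseq ν : ℝ)) :=
  weak_convergence_perturbation_general Ξ hΞcl μ hμΞ μs hμsΞ hweak g gs hgmeas hbd hyp_i hyp_ii

end
end

section
/- Let Ξ ⊆ ℝ^d be nonempty and closed, g : Ξ × ℝⁿ → ℝ lower semicontinuous (jointly), and assume for each x ∈ ℝⁿ there are ε_x > 0, M_x < ∞ with |g(ξ,y)| ≤ M_x for all ξ ∈ Ξ and y ∈ B(x,ε_x). For β ≥ 1 and θ^ν ∈ (0,∞) define g^ν(ξ,x) = inf_{ζ∈Ξ} [ g(ζ,x) + (1/(β θ^ν))‖ξ − ζ‖₂^β ]. Then g^ν(·,x) is continuous on Ξ for every x; explicitly, for any ξ₁, ξ₂ ∈ Ξ and any x, |g^ν(ξ₁,x) − g^ν(ξ₂,x)| ≤ L · max{‖ξ₁‖₂, ‖ξ₂‖₂, 1}^{β−1}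 · ‖ξ₁ − ξ₂‖₂, where L = (3^{β−1}/θ^ν) · max{(2 β M_x θ^ν)^{(β−1)/β}, 1}. -/
open MeasureTheory Filter Topology Metric Set Pointwise

noncomputable section

private lemma aux_rpow_sub_le {β : ℝ} (hβ : 1 ≤ β) {a b : ℝ} (hb : 0 ≤ b) (hab : b ≤ a) :
    a ^ β - b ^ β ≤ β * a ^ (β - 1) * (a - b) := by
  rcases eq_or_lt_of_le hab with rfl | h
  · simp
  · have hβ0 : (0:ℝ) < β := by linarith
    obtain ⟨k, hk, hk'⟩ := exists_hasDerivAt_eq_slope (fun x : ℝ => x ^ β)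
      (fun x : ℝ => β * x ^ (β - 1)) h
      (fun x _ => (Real.continuousAt_rpow_const x β (Or.inr hβ0.le)).continuousWithinAt)
      (fun x _ => Real.hasDerivAt_rpow_const (Or.inr hβ))
    have hk0 : 0 ≤ k := le_trans hb hk.1.le
    have hka : k ^ (β - 1) ≤ a ^ (β - 1) :=
      Real.rpow_le_rpow hk0 hk.2.le (by linarith)
    rw [eq_div_iff (by intro hcon; linarith [sub_eq_zero.mp hcon] : a - b ≠ 0)] at hk'
    have hmul : β * (a - b) * k ^ (β - 1) ≤ β * (a - b) * a ^ (β - 1) :=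
      mul_le_mul_of_nonneg_left hka (mul_nonneg hβ0.le (by linarith))
    nlinarith [hmul, hk']

private lemma aux_max_rpow {r p : ℝ} (hr : 0 ≤ r) (hp : 0 ≤ p) :
    max r 1 ^ p = max (r ^ p) 1 := by
  rcases le_total r 1 with h | h
  · rw [max_eq_right h, Real.one_rpow, max_eq_right (Real.rpow_le_one hr h hp)]
  · rw [max_eq_left h, max_eq_left (Real.one_le_rpow h hp)]

set_option maxHeartbeats 1000000 in
/-- Proposition 3.4(b): the epigraphical regularizations are (locally Lipschitz) continuous in ξ. -/
theorem env_continuous_lipschitz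

    {d n : ℕ}
    (Ξ : Set (EuclideanSpace ℝ (Fin d))) (hΞne : Ξ.Nonempty) (hΞcl : IsClosed Ξ)
    (g : EuclideanSpace ℝ (Fin d) → EuclideanSpace ℝ (Fin n) → ℝ)
    (hglsc : LowerSemicontinuousOn
      (fun q : EuclideanSpace ℝ (Fin d) × EuclideanSpace ℝ (Fin n) => g q.1 q.2)
      (Ξ ×ˢ (univ : Set (EuclideanSpace ℝ (Fin n)))))
    (εx Mx : EuclideanSpace ℝ (Fin n) → ℝ)
    (hεx : ∀ x, 0 < εx x)
    (hMx : ∀ x, ∀ ξ ∈ Ξ, ∀ y ∈ closedBall x (εx x), |g ξ y| ≤ Mx x)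
    (β : ℝ) (hβ : 1 ≤ β)
    (θ : ℕ → ℝ) (hθ : ∀ ν, 0 < θ ν)
    (gs : ℕ → EuclideanSpace ℝ (Fin d) → EuclideanSpace ℝ (Fin n) → ℝ)
    (hgs : ∀ ν ξ x, gs ν ξ x =
      ⨅ ζ : Ξ, (g ζ x + (1 / (β * θ ν)) * ‖(ζ : EuclideanSpace ℝ (Fin d)) - ξ‖ ^ β))
 :
    (∀ ν x, ContinuousOn (fun ξ => gs ν ξ x) Ξ) ∧
    (∀ (ν : ℕ) (x : EuclideanSpace ℝ (Fin n)), ∀ ξ1 ∈ Ξ, ∀ ξ2 ∈ Ξ,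
      |gs ν ξ1 x - gs ν ξ2 x| ≤
        ((3 : ℝ) ^ (β - 1) / θ ν) * max ((2 * β * Mx x * θ ν) ^ ((β - 1) / β)) 1 *
          max (max ‖ξ1‖ ‖ξ2‖) 1 ^ (β - 1) * ‖ξ1 - ξ2‖) := by
  haveI : Nonempty Ξ := hΞne.to_subtype
  obtain ⟨ξ0, hξ0⟩ := hΞne
  have hβ0 : (0:ℝ) < β := by linarith
  have hθβ : ∀ ν, 0 < β * θ ν := fun ν => mul_pos hβ0 (hθ ν)
  have hgb : ∀ x, ∀ ζ ∈ Ξ, |g ζ x| ≤ Mx x := fun x ζ hζ =>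
    hMx x ζ hζ x (mem_closedBall_self (hεx x).le)
  have hM0 : ∀ x, 0 ≤ Mx x := fun x => (abs_nonneg _).trans (hgb x ξ0 hξ0)
  have hbdd : ∀ ν x ξ, BddBelow (range fun ζ : Ξ =>
      g ζ x + (1 / (β * θ ν)) * ‖(ζ : EuclideanSpace ℝ (Fin d)) - ξ‖ ^ β) := by
    intro ν x ξ
    refine ⟨-(Mx x), ?_⟩
    rintro y ⟨ζ, rfl⟩
    have h1 := (abs_le.mp (hgb x ζ ζ.2)).1
    have h2 : 0 ≤ (1 / (β * θ ν)) * ‖(ζ : EuclideanSpace ℝ (Fin d)) - ξ‖ ^ β :=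
      mul_nonneg (one_div_pos.mpr (hθβ ν)).le (Real.rpow_nonneg (norm_nonneg _) _)
    linarith
  have hub : ∀ ν x, ∀ ξ ∈ Ξ, gs ν ξ x ≤ Mx x := by
    intro ν x ξ hξ
    rw [hgs]
    refine le_trans (ciInf_le (hbdd ν x ξ) ⟨ξ, hξ⟩) ?_
    have h0 : ‖ξ - ξ‖ = (0:ℝ) := by simp
    rw [h0, Real.zero_rpow (ne_of_gt hβ0), mul_zero, add_zero]
    exact (abs_le.mp (hgb x ξ hξ)).2
  -- key δ-estimate
  have key : ∀ ν x, ∀ ξ1 ∈ Ξ, ∀ ξ2 ∈ Ξ, ∀ δ : ℝ, 0 < δ →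
      gs ν ξ1 x - gs ν ξ2 x ≤ δ + (3:ℝ)^(β-1) / θ ν *
        max (((2*Mx x + δ) * (β * θ ν)) ^ ((β-1)/β)) 1 *
        max (max ‖ξ1‖ ‖ξ2‖) 1 ^ (β-1) * ‖ξ1 - ξ2‖ := by
    intro ν x ξ1 hξ1 ξ2 hξ2 δ hδ
    set c := 1/(β*θ ν) with hcdef
    have hc' : 0 < c := by rw [hcdef]; exact one_div_pos.mpr (hθβ ν)
    have h2 : (⨅ ζ : Ξ, (g ζ x + c * ‖(ζ : EuclideanSpace ℝ (Fin d)) - ξ2‖ ^ β))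
        < gs ν ξ2 x + δ := by
      rw [← hgs]; linarith
    obtain ⟨ζ, hζ⟩ := exists_lt_of_ciInf_lt h2
    set u := ‖(ζ : EuclideanSpace ℝ (Fin d)) - ξ1‖ with hudef
    set v := ‖(ζ : EuclideanSpace ℝ (Fin d)) - ξ2‖ with hvdef
    set D := ‖ξ1 - ξ2‖ with hDdef
    set N := max (max ‖ξ1‖ ‖ξ2‖) 1 with hNdef
    have hN1 : (1:ℝ) ≤ N := le_max_right _ _
    have hu0 : 0 ≤ u := norm_nonneg _
    have hv0 : 0 ≤ v := norm_nonneg _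
    have hD0 : 0 ≤ D := norm_nonneg _
    have hgζ := abs_le.mp (hgb x ζ ζ.2)
    set S := (2*Mx x + δ) * (β * θ ν) with hSdef
    have hS0 : 0 ≤ S := mul_nonneg (by linarith [hM0 x]) (hθβ ν).le
    have hc1 : c * (β * θ ν) = 1 := by
      rw [hcdef, one_div, inv_mul_cancel₀ (ne_of_gt (hθβ ν))]
    have hvβ : v ^ β ≤ S := by
      have h5 : c * v ^ β ≤ 2*Mx x + δ := by
        have h4 := hub ν x ξ2 hξ2
        linarith [hgζ.1]
      have h6 := mul_le_mul_of_nonneg_right h5 (hθβ ν).le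
      have h7 : c * v ^ β * (β * θ ν) = v ^ β := by
        rw [mul_comm c (v ^ β), mul_assoc, hc1, mul_one]
      rw [hSdef]
      linarith [h6, h7]
    set r := S ^ β⁻¹ with hrdef
    have hr0 : 0 ≤ r := Real.rpow_nonneg hS0 _
    have hvr : v ≤ r := by
      have h7 : (v ^ β) ^ β⁻¹ ≤ S ^ β⁻¹ :=
        Real.rpow_le_rpow (Real.rpow_nonneg hv0 _) hvβ (inv_nonneg.mpr hβ0.le)
      rwa [Real.rpow_rpow_inv hv0 (ne_of_gt hβ0)] at h7
    have huv : u ≤ v + D := by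
      have heq : (ζ : EuclideanSpace ℝ (Fin d)) - ξ1
          = ((ζ : EuclideanSpace ℝ (Fin d)) - ξ2) + (ξ2 - ξ1) := by abel
      calc u = ‖((ζ : EuclideanSpace ℝ (Fin d)) - ξ2) + (ξ2 - ξ1)‖ := by rw [hudef, heq]
        _ ≤ v + ‖ξ2 - ξ1‖ := norm_add_le _ _
        _ = v + D := by rw [hDdef, norm_sub_rev]
    have hvu : v ≤ u + D := by
      have heq : (ζ : EuclideanSpace ℝ (Fin d)) - ξ2
          = ((ζ : EuclideanSpace ℝ (Fin d)) - ξ1) + (ξ1 - ξ2) := by abel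
      calc v = ‖((ζ : EuclideanSpace ℝ (Fin d)) - ξ1) + (ξ1 - ξ2)‖ := by rw [hvdef, heq]
        _ ≤ u + D := norm_add_le _ _
    have hDN : D ≤ 2 * N := by
      have h1 : ‖ξ1‖ ≤ N := le_trans (le_max_left _ _) (le_max_left _ _)
      have h2 : ‖ξ2‖ ≤ N := le_trans (le_max_right _ _) (le_max_left _ _)
      calc D ≤ ‖ξ1‖ + ‖ξ2‖ := norm_sub_le _ _
        _ ≤ 2 * N := by linarith
    have hmaxuv : max u v ≤ 3 * max r 1 * N := by
      have h1 : r ≤ max r 1 := le_max_left _ _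
      have h2 : (1:ℝ) ≤ max r 1 := le_max_right _ _
      have h3 : r ≤ max r 1 * N := by nlinarith
      have h4 : 2 * N ≤ 2 * (max r 1 * N) := by nlinarith
      rw [max_le_iff]
      constructor <;> nlinarith
    have hdiff : u ^ β - v ^ β ≤ β * (3 * max r 1 * N) ^ (β-1) * D := by
      have hmin0 : 0 ≤ min u v := le_min hu0 hv0
      have hmono1 : u ^ β ≤ (max u v) ^ β :=
        Real.rpow_le_rpow hu0 (le_max_left _ _) hβ0.le
      have hmono2 : (min u v) ^ β ≤ v ^ β :=
        Real.rpow_le_rpow hmin0 (min_le_right _ _) hβ0.le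
      have h1 := aux_rpow_sub_le hβ hmin0 (min_le_max (a := u) (b := v))
      have h2 : max u v - min u v ≤ D := by
        rcases le_total u v with h | h
        · rw [max_eq_right h, min_eq_left h]; linarith
        · rw [max_eq_left h, min_eq_right h]; linarith
      have hmax0 : 0 ≤ max u v := le_trans hu0 (le_max_left _ _)
      have h3 : (max u v)^(β-1) ≤ (3 * max r 1 * N)^(β-1) :=
        Real.rpow_le_rpow hmax0 hmaxuv (by linarith)
      have hp1 : 0 ≤ (max u v)^(β-1) := Real.rpow_nonneg hmax0 _
      have h4 : β * (max u v)^(β-1) * (max u v - min u v) ≤ β * (max u v)^(β-1) * D := by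
        have := mul_le_mul_of_nonneg_left h2 (by positivity : (0:ℝ) ≤ β * (max u v)^(β-1))
        linarith
      have h5 : β * (max u v)^(β-1) * D ≤ β * (3 * max r 1 * N)^(β-1) * D :=
        mul_le_mul_of_nonneg_right (mul_le_mul_of_nonneg_left h3 hβ0.le) hD0
      linarith
    have hrp : r ^ (β-1) = S ^ ((β-1)/β) := by
      rw [hrdef, ← Real.rpow_mul hS0, inv_mul_eq_div]
    have hsplit : (3 * max r 1 * N) ^ (β-1)
        = 3^(β-1) * max (S ^ ((β-1)/β)) 1 * N ^ (β-1) := by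
      rw [Real.mul_rpow (by positivity) (by linarith : (0:ℝ) ≤ N),
        Real.mul_rpow (by norm_num) (by positivity : (0:ℝ) ≤ max r 1),
        aux_max_rpow hr0 (by linarith : (0:ℝ) ≤ β - 1), hrp]
    have hA1 : gs ν ξ1 x ≤ g ζ x + c * u ^ β := by
      rw [hgs]; exact ciInf_le (hbdd ν x ξ1) ζ
    have hcd : c * (u^β - v^β) ≤ c * (β * (3 * max r 1 * N)^(β-1) * D) :=
      mul_le_mul_of_nonneg_left hdiff hc'.le
    have hfinal : c * (β * (3 * max r 1 * N)^(β-1) * D)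
        = 3^(β-1) / θ ν * max (S ^ ((β-1)/β)) 1 * N^(β-1) * D := by
      rw [hsplit, hcdef]
      have hβne : β ≠ 0 := ne_of_gt hβ0
      have hθne : θ ν ≠ 0 := ne_of_gt (hθ ν)
      field_simp
    have hexp : c * (u ^ β - v ^ β) = c * u ^ β - c * v ^ β := by ring
    linarith [hA1, hcd, hfinal, hζ, hexp]
  -- one-sided Lipschitz estimate via limit δ → 0⁺
  have lip1 : ∀ (ν : ℕ) (x : EuclideanSpace ℝ (Fin n)), ∀ ξ1 ∈ Ξ, ∀ ξ2 ∈ Ξ,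
      gs ν ξ1 x - gs ν ξ2 x ≤
        ((3 : ℝ) ^ (β - 1) / θ ν) * max ((2 * β * Mx x * θ ν) ^ ((β - 1) / β)) 1 *
          max (max ‖ξ1‖ ‖ξ2‖) 1 ^ (β - 1) * ‖ξ1 - ξ2‖ := by
    intro ν x ξ1 hξ1 ξ2 hξ2
    set N := max (max ‖ξ1‖ ‖ξ2‖) 1 with hNdef
    set D := ‖ξ1 - ξ2‖ with hDdef
    set F : ℝ → ℝ := fun δ => δ + (3:ℝ)^(β-1) / θ ν *
        max (((2*Mx x + δ) * (β * θ ν)) ^ ((β-1)/β)) 1 * N ^ (β-1) * D with hFdef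
    have hF0 : F 0 = ((3 : ℝ) ^ (β - 1) / θ ν) *
        max ((2 * β * Mx x * θ ν) ^ ((β - 1) / β)) 1 * N ^ (β - 1) * D := by
      have hb : (2*Mx x + 0) * (β * θ ν) = 2 * β * Mx x * θ ν := by ring
      simp only [hFdef, hb, zero_add]
    have hcont : ContinuousAt F 0 := by
      have h1 : ContinuousAt (fun δ : ℝ => ((2*Mx x + δ) * (β * θ ν)) ^ ((β-1)/β)) 0 := by
        have hp : 0 ≤ (β-1)/β := div_nonneg (by linarith) hβ0.le
        exact (Real.continuousAt_rpow_const _ _ (Or.inr hp)).comp (by fun_prop)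
      exact continuousAt_id.add
        (((continuousAt_const.mul (h1.max continuousAt_const)).mul
          continuousAt_const).mul continuousAt_const)
    have htend : Tendsto F (𝓝[>] (0:ℝ)) (𝓝 (F 0)) :=
      hcont.tendsto.mono_left nhdsWithin_le_nhds
    rw [← hF0]
    refine ge_of_tendsto htend ?_
    filter_upwards [self_mem_nhdsWithin] with δ hδ
    exact key ν x ξ1 hξ1 ξ2 hξ2 δ hδ
  have lip : ∀ (ν : ℕ) (x : EuclideanSpace ℝ (Fin n)), ∀ ξ1 ∈ Ξ, ∀ ξ2 ∈ Ξ,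
      |gs ν ξ1 x - gs ν ξ2 x| ≤
        ((3 : ℝ) ^ (β - 1) / θ ν) * max ((2 * β * Mx x * θ ν) ^ ((β - 1) / β)) 1 *
          max (max ‖ξ1‖ ‖ξ2‖) 1 ^ (β - 1) * ‖ξ1 - ξ2‖ := by
    intro ν x ξ1 hξ1 ξ2 hξ2
    rw [abs_sub_le_iff]
    refine ⟨lip1 ν x ξ1 hξ1 ξ2 hξ2, ?_⟩
    have h := lip1 ν x ξ2 hξ2 ξ1 hξ1
    rwa [max_comm ‖ξ2‖ ‖ξ1‖, norm_sub_rev ξ2 ξ1] at h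
  refine ⟨?_, lip⟩
  intro ν x ξ0' hξ0'
  set L0 := (3:ℝ)^(β-1) / θ ν * max ((2 * β * Mx x * θ ν) ^ ((β - 1) / β)) 1 with hL0def
  have hL0' : 0 ≤ L0 := by
    rw [hL0def]
    exact mul_nonneg (div_nonneg (Real.rpow_nonneg (by norm_num) _) (hθ ν).le)
      (le_trans zero_le_one (le_max_right _ _))
  set B := max (‖ξ0'‖ + 1) 1 with hBdef
  have hB0 : (0:ℝ) ≤ B := le_trans zero_le_one (le_max_right _ _)
  set C := L0 * B ^ (β-1) with hCdef
  have hC0 : 0 ≤ C := by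
    rw [hCdef]
    exact mul_nonneg hL0' (Real.rpow_nonneg hB0 _)
  have hbound : ∀ ξ ∈ Ξ, ξ ∈ ball ξ0' 1 → |gs ν ξ x - gs ν ξ0' x| ≤ C * ‖ξ - ξ0'‖ := by
    intro ξ hξ hball
    have h1 := lip ν x ξ hξ ξ0' hξ0'
    have hN : max (max ‖ξ‖ ‖ξ0'‖) 1 ≤ B := by
      have hb : ‖ξ - ξ0'‖ < 1 := mem_ball_iff_norm.mp hball
      have hξn : ‖ξ‖ ≤ ‖ξ0'‖ + 1 := by
        calc ‖ξ‖ = ‖(ξ - ξ0') + ξ0'‖ := by rw [sub_add_cancel]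
          _ ≤ ‖ξ - ξ0'‖ + ‖ξ0'‖ := norm_add_le _ _
          _ ≤ ‖ξ0'‖ + 1 := by linarith
      rw [max_le_iff, max_le_iff]
      exact ⟨⟨le_trans hξn (le_max_left _ _),
        le_trans (by linarith : ‖ξ0'‖ ≤ ‖ξ0'‖ + 1) (le_max_left _ _)⟩, le_max_right _ _⟩
    have hNp : max (max ‖ξ‖ ‖ξ0'‖) 1 ^ (β-1) ≤ B ^ (β-1) :=
      Real.rpow_le_rpow (le_trans zero_le_one (le_max_right _ _)) hN (by linarith)
    calc |gs ν ξ x - gs ν ξ0' x|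
        ≤ L0 * max (max ‖ξ‖ ‖ξ0'‖) 1 ^ (β-1) * ‖ξ - ξ0'‖ := h1
      _ ≤ C * ‖ξ - ξ0'‖ := by
          rw [hCdef]
          exact mul_le_mul_of_nonneg_right (mul_le_mul_of_nonneg_left hNp hL0')
            (norm_nonneg _)
  have h0 : Tendsto (fun ξ => dist (gs ν ξ x) (gs ν ξ0' x)) (𝓝[Ξ] ξ0') (𝓝 0) := by
    apply squeeze_zero' (Eventually.of_forall fun ξ => dist_nonneg)
      (g := fun ξ => C * dist ξ ξ0')
    · filter_upwards [self_mem_nhdsWithin,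
        mem_nhdsWithin_of_mem_nhds (ball_mem_nhds ξ0' one_pos)] with ξ hξΞ hξb
      rw [Real.dist_eq, dist_eq_norm]
      exact hbound ξ hξΞ hξb
    · have h1 : Tendsto (fun ξ : EuclideanSpace ℝ (Fin d) => dist ξ ξ0') (𝓝 ξ0') (𝓝 0) := by
        have := (continuous_id.dist (continuous_const (y := ξ0'))).tendsto ξ0'
        simpa using this
      have h2 := (h1.mono_left (nhdsWithin_le_nhds (s := Ξ))).const_mul C
      simpa using h2
  exact tendsto_iff_dist_tendsto_zero.mpr h0

end
end

section
/- Let Ξ ⊆ ℝ^d be nonempty and closed, g : Ξ × ℝⁿ → ℝ lower semicontinuous (jointly), and assume for each x ∈ ℝⁿ there are ε_x > 0, M_x < ∞ with |g(ξ,y)| ≤ M_x for all ξ ∈ Ξ and y ∈ B(x,ε_x). For β ≥ 1 and θ^ν ∈ (0,∞) → 0 define g^ν(ξ,x) = inf_{ζ∈Ξ} [ g(ζ,x) + (1/(β θ^ν))‖ξ − ζ‖₂^β ]. Then for every sequence ξ^ν → ξ in Ξ and every x^ν → x in ℝⁿ, liminf_ν g^ν(ξ^ν,x^ν) ≥ g(ξ,x).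 -/
/-!
Fix `a < g(ξ, x)`. By lower semicontinuity there is `r > 0` such that, for large `ν`,
`g(ζ, x^ν) > a` for every `ζ ∈ Ξ` within `r` of `ξ^ν`. Every other `ζ ∈ Ξ` pays a penalty of at
least `r^β / (β θ^ν) → ∞`, which eventually beats the uniform bound `g ≥ -M_x` near `x`. Hence
`g^ν(ξ^ν, x^ν) ≥ a` for large `ν`. Taking `ζ = ξ^ν` gives `g^ν(ξ^ν, x^ν) ≤ M_x`, without which the
liminf in `ℝ` would be a junk value.
-/

open MeasureTheory Filter Topology Metric Set Pointwise

noncomputable section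

section Penalty

variable {E : Type*} [SeminormedAddCommGroup E] {S : Set E} {f : E → ℝ} {c β M : ℝ}

lemma bddBelow_range_add_penalty (hf : ∀ ζ ∈ S, M ≤ f ζ) (hc : 0 ≤ c) (ξ : E) :
    BddBelow (range fun ζ : S => f ζ + c * ‖(ζ : E) - ξ‖ ^ β) :=
  ⟨M, by
    rintro _ ⟨ζ, rfl⟩
    exact le_add_of_le_of_nonneg (hf ζ ζ.2) (mul_nonneg hc (Real.rpow_nonneg (norm_nonneg _) β))⟩

lemma ciInf_add_penalty_le (hf : ∀ ζ ∈ S, M ≤ f ζ) (hc : 0 ≤ c) (hβ : β ≠ 0) {ξ : E}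
    (hξ : ξ ∈ S) : ⨅ ζ : S, (f ζ + c * ‖(ζ : E) - ξ‖ ^ β) ≤ f ξ := by
  refine (ciInf_le (bddBelow_range_add_penalty hf hc ξ) ⟨ξ, hξ⟩).trans_eq ?_
  simp [Real.zero_rpow hβ]

lemma le_ciInf_add_penalty [Nonempty S] {a r : ℝ} (hr : 0 ≤ r) (hβ : 0 ≤ β) (hc : 0 ≤ c) {ξ : E}
    (hf : ∀ ζ ∈ S, M ≤ f ζ) (hnear : ∀ ζ ∈ S, ‖ζ - ξ‖ < r → a ≤ f ζ)
    (hfar : a ≤ M + c * r ^ β) : a ≤ ⨅ ζ : S, (f ζ + c * ‖(ζ : E) - ξ‖ ^ β) := by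
  refine le_ciInf fun ζ => ?_
  have hpen : 0 ≤ c * ‖(ζ : E) - ξ‖ ^ β := mul_nonneg hc (Real.rpow_nonneg (norm_nonneg _) β)
  rcases lt_or_ge ‖(ζ : E) - ξ‖ r with hlt | hge
  · linarith [hnear ζ ζ.2 hlt]
  · have := mul_le_mul_of_nonneg_left (Real.rpow_le_rpow hr hge hβ) hc
    linarith [hf ζ ζ.2]

end Penalty

lemma LowerSemicontinuousOn.eventually_lt_of_tendsto {X Y ι : Type*} [PseudoMetricSpace X]
    [TopologicalSpace Y] {s : Set X} {f : X → Y → ℝ}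
    (hf : LowerSemicontinuousOn (fun q : X × Y => f q.1 q.2) (s ×ˢ univ)) {ξ : X} (hξ : ξ ∈ s)
    {x : Y} {a : ℝ} (ha : a < f ξ x) {l : Filter ι} {ξs : ι → X} {xs : ι → Y}
    (hξs : Tendsto ξs l (𝓝 ξ)) (hxs : Tendsto xs l (𝓝 x)) :
    ∃ r > 0, ∀ᶠ i in l, ∀ ζ ∈ s, dist ζ (ξs i) < r → a < f ζ (xs i) := by
  have h := hf (ξ, x) ⟨hξ, mem_univ x⟩ a ha
  rw [nhdsWithin_prod_eq, nhdsWithin_univ] at h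
  obtain ⟨U, hU, V, hV, hUV⟩ := mem_prod_iff.1 h
  obtain ⟨ε, hε, hball⟩ := Metric.mem_nhdsWithin_iff.1 hU
  refine ⟨ε / 2, half_pos hε, ?_⟩
  filter_upwards [hξs (ball_mem_nhds ξ (half_pos hε)), hxs hV] with i hi hxi ζ hζ hdist
  have hζξ : ζ ∈ ball ξ ε := by
    rw [mem_preimage, mem_ball] at hi
    rw [mem_ball]
    linarith [dist_triangle ζ (ξs i) ξ]
  exact hUV (mk_mem_prod (hball ⟨hζξ, hζ⟩) hxi)

lemma tendsto_one_div_mul_atTop {ι : Type*} {l : Filter ι} {θ : ι → ℝ} (hθ : ∀ i, 0 < θ i)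
    (hθ0 : Tendsto θ l (𝓝 0)) {β : ℝ} (hβ : 0 < β) :
    Tendsto (fun i => 1 / (β * θ i)) l atTop := by
  have hθinv : Tendsto (fun i => (θ i)⁻¹) l atTop :=
    tendsto_inv_nhdsGT_zero.comp (tendsto_nhdsWithin_iff.2 ⟨hθ0, .of_forall hθ⟩)
  simpa only [one_div, mul_inv] using hθinv.const_mul_atTop (inv_pos.2 hβ)

theorem env_liminf_general

    {d n : ℕ}
    (Ξ : Set (EuclideanSpace ℝ (Fin d)))
    (g : EuclideanSpace ℝ (Fin d) → EuclideanSpace ℝ (Fin n) → ℝ)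
    (hglsc : LowerSemicontinuousOn
      (fun q : EuclideanSpace ℝ (Fin d) × EuclideanSpace ℝ (Fin n) => g q.1 q.2)
      (Ξ ×ˢ (univ : Set (EuclideanSpace ℝ (Fin n)))))
    (εx Mx : EuclideanSpace ℝ (Fin n) → ℝ)
    (hεx : ∀ x, 0 < εx x)
    (hMx : ∀ x, ∀ ξ ∈ Ξ, ∀ y ∈ closedBall x (εx x), |g ξ y| ≤ Mx x)
    (β : ℝ) (hβ : 1 ≤ β)
    (θ : ℕ → ℝ) (hθ : ∀ ν, 0 < θ ν)
    (gs : ℕ → EuclideanSpace ℝ (Fin d) → EuclideanSpace ℝ (Fin n) → ℝ)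
    (hgs : ∀ ν ξ x, gs ν ξ x =
      ⨅ ζ : Ξ, (g ζ x + (1 / (β * θ ν)) * ‖(ζ : EuclideanSpace ℝ (Fin d)) - ξ‖ ^ β))

    (hθ0 : Tendsto θ atTop (𝓝 0)) :
    ∀ ξ ∈ Ξ, ∀ ξs : ℕ → EuclideanSpace ℝ (Fin d), (∀ ν, ξs ν ∈ Ξ) →
      Tendsto ξs atTop (𝓝 ξ) →
      ∀ (x : EuclideanSpace ℝ (Fin n)) (xs : ℕ → EuclideanSpace ℝ (Fin n)),
      Tendsto xs atTop (𝓝 x) →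
      g ξ x ≤ liminf (fun ν => gs ν (ξs ν) (xs ν)) atTop := by
  intro ξ hξ ξs hξs hξconv x xs hxconv
  have hβ0 : 0 < β := zero_lt_one.trans_le hβ
  have hc : ∀ ν, 0 ≤ 1 / (β * θ ν) := fun ν => (one_div_pos.2 (mul_pos hβ0 (hθ ν))).le
  have hxs_near : ∀ᶠ ν in atTop, xs ν ∈ closedBall x (εx x) :=
    hxconv (closedBall_mem_nhds x (hεx x))
  have hlow : ∀ᶠ ν in atTop, ∀ ζ ∈ Ξ, -Mx x ≤ g ζ (xs ν) :=
    hxs_near.mono fun ν hν ζ hζ => neg_le_of_abs_le (hMx x ζ hζ _ hν)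
  have hcobdd : IsCoboundedUnder (· ≥ ·) atTop fun ν => gs ν (ξs ν) (xs ν) := by
    refine (isBoundedUnder_of_eventually_le (a := Mx x) ?_).isCoboundedUnder_ge
    filter_upwards [hxs_near, hlow] with ν hν hlowν
    rw [hgs]
    exact (ciInf_add_penalty_le hlowν (hc ν) hβ0.ne' (hξs ν)).trans
      (le_of_abs_le (hMx x _ (hξs ν) _ hν))
  refine le_of_forall_lt_imp_le_of_dense fun a ha => le_liminf_of_le hcobdd ?_
  obtain ⟨r, hr, hnear⟩ := hglsc.eventually_lt_of_tendsto hξ ha hξconv hxconv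
  have hfar : ∀ᶠ ν in atTop, a ≤ -Mx x + 1 / (β * θ ν) * r ^ β :=
    (tendsto_atTop_add_const_left _ _ ((tendsto_one_div_mul_atTop hθ hθ0 hβ0).atTop_mul_const
      (Real.rpow_pos_of_pos hr β))).eventually_ge_atTop a
  have : Nonempty Ξ := ⟨⟨ξ, hξ⟩⟩
  filter_upwards [hlow, hnear, hfar] with ν hlowν hnearν hfarν
  rw [hgs]
  refine le_ciInf_add_penalty hr.le hβ0.le (hc ν) hlowν (fun ζ hζ hζr => ?_) hfarν
  exact (hnearν ζ hζ (by rwa [dist_eq_norm])).le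

/-- Proposition 3.4(c): lower epi-limit property of the epigraphical regularizations. -/
theorem env_liminf

    {d n : ℕ}
    (Ξ : Set (EuclideanSpace ℝ (Fin d))) (hΞne : Ξ.Nonempty) (hΞcl : IsClosed Ξ)
    (g : EuclideanSpace ℝ (Fin d) → EuclideanSpace ℝ (Fin n) → ℝ)
    (hglsc : LowerSemicontinuousOn
      (fun q : EuclideanSpace ℝ (Fin d) × EuclideanSpace ℝ (Fin n) => g q.1 q.2)
      (Ξ ×ˢ (univ : Set (EuclideanSpace ℝ (Fin n)))))
    (εx Mx : EuclideanSpace ℝ (Fin n) → ℝ)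
    (hεx : ∀ x, 0 < εx x)
    (hMx : ∀ x, ∀ ξ ∈ Ξ, ∀ y ∈ closedBall x (εx x), |g ξ y| ≤ Mx x)
    (β : ℝ) (hβ : 1 ≤ β)
    (θ : ℕ → ℝ) (hθ : ∀ ν, 0 < θ ν)
    (gs : ℕ → EuclideanSpace ℝ (Fin d) → EuclideanSpace ℝ (Fin n) → ℝ)
    (hgs : ∀ ν ξ x, gs ν ξ x =
      ⨅ ζ : Ξ, (g ζ x + (1 / (β * θ ν)) * ‖(ζ : EuclideanSpace ℝ (Fin d)) - ξ‖ ^ β))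

    (hθ0 : Tendsto θ atTop (𝓝 0)) :
    ∀ ξ ∈ Ξ, ∀ ξs : ℕ → EuclideanSpace ℝ (Fin d), (∀ ν, ξs ν ∈ Ξ) →
      Tendsto ξs atTop (𝓝 ξ) →
      ∀ (x : EuclideanSpace ℝ (Fin n)) (xs : ℕ → EuclideanSpace ℝ (Fin n)),
      Tendsto xs atTop (𝓝 x) →
      g ξ x ≤ liminf (fun ν => gs ν (ξs ν) (xs ν)) atTop :=
  env_liminf_general Ξ g hglsc εx Mx hεx hMx β hβ θ hθ gs hgs hθ0

end
end
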